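/- arXiv:2305.12836 — 8 statements merged into one kernel-verified Lean document; each statement's English description precedes it below -/
import Mathlib

section
/- Let V be a finite-dimensional real inner product space of dimension n+1 ≥ 2 and S(V) = {u ∈ V : ‖u‖ = 1} its unit sphere. For u ∈ S(V) and w ∈ V with ⟨u,w⟩ = 0, set π(u,w) = ( ((1−‖w‖²)u + 2w)/(1+‖w‖²) , ((‖w‖²−1)u + 2w)/(1+‖w‖²) ). Then: (i) if ‖w‖ ≤ 1, both components of π(u,w) lie in S(V); (ii) if ‖w‖ = 1, both components equal w, so π(u,w) lies on the diagonal of S(V) × S(V); (iii) π restricts to a homeomorphism from E = {(u,w) ∈ V × V : ‖u‖ = 1, ⟨u,w⟩ = 0, ‖w‖ < 1} (with the subspace topology of V × V) onto the complement of the diagonal, {(x,y) ∈ S(V) × S(V) : x ≠ y}. -/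
/-!
Write `t = ‖w‖²`. Since `u ⊥ w` and `‖u‖ = 1`, both `(±(1 - t)) u + 2 w` have squared norm
`(1 - t)² + 4t = (1 + t)²`, so both components of `π(u, w)` are unit vectors. Their difference
`2(1 - t)/(1 + t) • u` and sum `4/(1 + t) • w` recover `u` and `w` when `t < 1`: for `x ≠ y` on
the sphere, `u = (x - y)/‖x - y‖` and `w = (x + y)/(2 + ‖x - y‖)`, which is orthogonal to `u`
because `‖x‖ = ‖y‖`.
-/

open scoped RealInnerProductSpace

lemma two_mul_one_sub_sq_div_pos {r : ℝ} (hr0 : 0 ≤ r) (hr : r < 1) :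
    0 < 2 * (1 - r ^ 2) / (1 + r ^ 2) := by
  have : 0 < 1 - r ^ 2 := by nlinarith
  positivity

section DiscBundle

variable {V : Type*} [NormedAddCommGroup V] [InnerProductSpace ℝ V]

lemma norm_smul_add_smul_sq_of_inner_eq_zero {u w : V} (huw : ⟪u, w⟫ = 0) (a b : ℝ) :
    ‖a • u + b • w‖ ^ 2 = a ^ 2 * ‖u‖ ^ 2 + b ^ 2 * ‖w‖ ^ 2 := by
  rw [norm_add_sq_real, real_inner_smul_left, real_inner_smul_right, huw, norm_smul, norm_smul,
    Real.norm_eq_abs, Real.norm_eq_abs, mul_pow, mul_pow, sq_abs, sq_abs]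
  ring

lemma norm_inv_smul_smul_add_two_smul {u w : V} (hu : ‖u‖ = 1) (huw : ⟪u, w⟫ = 0) {a : ℝ}
    (ha : a ^ 2 = (1 - ‖w‖ ^ 2) ^ 2) :
    ‖(1 + ‖w‖ ^ 2)⁻¹ • (a • u + (2 : ℝ) • w)‖ = 1 := by
  have hpos : (0 : ℝ) < 1 + ‖w‖ ^ 2 := by positivity
  have hsq : ‖a • u + (2 : ℝ) • w‖ ^ 2 = (1 + ‖w‖ ^ 2) ^ 2 := by
    rw [norm_smul_add_smul_sq_of_inner_eq_zero huw, hu, ha]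
    ring
  have hnorm : ‖a • u + (2 : ℝ) • w‖ = 1 + ‖w‖ ^ 2 :=
    (pow_left_inj₀ (norm_nonneg _) hpos.le two_ne_zero).1 hsq
  rw [norm_smul, hnorm, Real.norm_eq_abs, abs_of_pos (inv_pos.2 hpos), inv_mul_cancel₀ hpos.ne']

/-- The map `π` of the paper, as a map on pairs `(u, w)`. -/
noncomputable def discToOffDiag (p : V × V) : V × V :=
  ((1 + ‖p.2‖ ^ 2)⁻¹ • ((1 - ‖p.2‖ ^ 2) • p.1 + (2 : ℝ) • p.2),
   (1 + ‖p.2‖ ^ 2)⁻¹ • ((‖p.2‖ ^ 2 - 1) • p.1 + (2 : ℝ) • p.2))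

noncomputable def offDiagToDisc (q : V × V) : V × V :=
  (‖q.1 - q.2‖⁻¹ • (q.1 - q.2), (2 + ‖q.1 - q.2‖)⁻¹ • (q.1 + q.2))

lemma norm_discToOffDiag_fst {u w : V} (hu : ‖u‖ = 1) (huw : ⟪u, w⟫ = 0) :
    ‖(discToOffDiag (u, w)).1‖ = 1 :=
  norm_inv_smul_smul_add_two_smul hu huw rfl

lemma norm_discToOffDiag_snd {u w : V} (hu : ‖u‖ = 1) (huw : ⟪u, w⟫ = 0) :
    ‖(discToOffDiag (u, w)).2‖ = 1 :=
  norm_inv_smul_smul_add_two_smul hu huw (by ring)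

lemma discToOffDiag_of_norm_eq_one (u : V) {w : V} (hw : ‖w‖ = 1) :
    discToOffDiag (u, w) = (w, w) := by
  simp only [discToOffDiag, hw]
  ext <;> (dsimp only; match_scalars <;> norm_num)

lemma discToOffDiag_fst_sub_snd (u w : V) :
    (discToOffDiag (u, w)).1 - (discToOffDiag (u, w)).2 =
      (2 * (1 - ‖w‖ ^ 2) / (1 + ‖w‖ ^ 2)) • u := by
  have hpos : (1 + ‖w‖ ^ 2 : ℝ) ≠ 0 := by positivity
  simp only [discToOffDiag]
  match_scalars <;> field_simp <;> ring

lemma discToOffDiag_fst_add_snd (u w : V) :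
    (discToOffDiag (u, w)).1 + (discToOffDiag (u, w)).2 = (4 / (1 + ‖w‖ ^ 2)) • w := by
  have hpos : (1 + ‖w‖ ^ 2 : ℝ) ≠ 0 := by positivity
  simp only [discToOffDiag]
  match_scalars <;> field_simp <;> ring

lemma discToOffDiag_fst_ne_snd {u w : V} (hu : ‖u‖ = 1) (hw : ‖w‖ < 1) :
    (discToOffDiag (u, w)).1 ≠ (discToOffDiag (u, w)).2 := by
  rw [← sub_ne_zero, discToOffDiag_fst_sub_snd]
  exact smul_ne_zero (two_mul_one_sub_sq_div_pos (norm_nonneg w) hw).ne' (norm_ne_zero_iff.1 (hu ▸ one_ne_zero))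

lemma offDiagToDisc_discToOffDiag {u w : V} (hu : ‖u‖ = 1) (hw : ‖w‖ < 1) :
    offDiagToDisc (discToOffDiag (u, w)) = (u, w) := by
  have hs := two_mul_one_sub_sq_div_pos (norm_nonneg w) hw
  have hpos : (1 + ‖w‖ ^ 2 : ℝ) ≠ 0 := by positivity
  have hnorm : ‖(discToOffDiag (u, w)).1 - (discToOffDiag (u, w)).2‖ =
      2 * (1 - ‖w‖ ^ 2) / (1 + ‖w‖ ^ 2) := by
    rw [discToOffDiag_fst_sub_snd, norm_smul, hu, Real.norm_eq_abs, abs_of_pos hs, mul_one]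
  rw [offDiagToDisc, hnorm, discToOffDiag_fst_sub_snd, discToOffDiag_fst_add_snd,
    smul_smul, smul_smul, inv_mul_cancel₀ hs.ne', one_smul]
  congr 1
  rw [← one_smul ℝ w, smul_smul, mul_one]
  congr 1
  field_simp
  ring

lemma norm_add_sq_of_norm_eq_one {x y : V} (hx : ‖x‖ = 1) (hy : ‖y‖ = 1) :
    ‖x + y‖ ^ 2 = 4 - ‖x - y‖ ^ 2 := by
  have := parallelogram_law_with_norm ℝ x y
  rw [hx, hy] at this
  linarith

lemma norm_offDiagToDisc_snd_sq {x y : V} (hx : ‖x‖ = 1) (hy : ‖y‖ = 1) :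
    ‖(offDiagToDisc (x, y)).2‖ ^ 2 = (2 - ‖x - y‖) / (2 + ‖x - y‖) := by
  have hpos : (0 : ℝ) < 2 + ‖x - y‖ := by positivity
  rw [offDiagToDisc, norm_smul, Real.norm_eq_abs, abs_of_pos (inv_pos.2 hpos), mul_pow,
    norm_add_sq_of_norm_eq_one hx hy]
  field_simp
  ring

lemma discToOffDiag_offDiagToDisc {x y : V} (hx : ‖x‖ = 1) (hy : ‖y‖ = 1) (hxy : x ≠ y) :
    discToOffDiag (offDiagToDisc (x, y)) = (x, y) := by
  have hd : ‖x - y‖ ≠ 0 := norm_ne_zero_iff.2 (sub_ne_zero.2 hxy)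
  have hpos : (0 : ℝ) < 2 + ‖x - y‖ := by positivity
  have hden : 1 + ‖(offDiagToDisc (x, y)).2‖ ^ 2 = 4 / (2 + ‖x - y‖) := by
    rw [norm_offDiagToDisc_snd_sq hx hy]
    field_simp
    ring
  rw [discToOffDiag, hden, norm_offDiagToDisc_snd_sq hx hy]
  simp only [offDiagToDisc]
  ext <;> (dsimp only; match_scalars <;> field_simp <;> ring)

lemma offDiagToDisc_mem {x y : V} (hx : ‖x‖ = 1) (hy : ‖y‖ = 1) (hxy : x ≠ y) :
    ‖(offDiagToDisc (x, y)).1‖ = 1 ∧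
      ⟪(offDiagToDisc (x, y)).1, (offDiagToDisc (x, y)).2⟫ = 0 ∧
      ‖(offDiagToDisc (x, y)).2‖ < 1 := by
  have hd : 0 < ‖x - y‖ := norm_pos_iff.2 (sub_ne_zero.2 hxy)
  have hpos : (0 : ℝ) < 2 + ‖x - y‖ := by positivity
  refine ⟨?_, ?_, ?_⟩
  · rw [offDiagToDisc, norm_smul, Real.norm_eq_abs, abs_of_pos (inv_pos.2 hd),
      inv_mul_cancel₀ hd.ne']
  · rw [offDiagToDisc, real_inner_smul_left, real_inner_smul_right, real_inner_comm,
      (real_inner_add_sub_eq_zero_iff x y).2 (hx.trans hy.symm), mul_zero, mul_zero]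
  · have hsq : ‖(offDiagToDisc (x, y)).2‖ ^ 2 < 1 := by
      rw [norm_offDiagToDisc_snd_sq hx hy, div_lt_one hpos]
      linarith
    exact (sq_lt_one_iff₀ (norm_nonneg _)).1 hsq

lemma continuous_discToOffDiag : Continuous (discToOffDiag : V × V → V × V) := by
  unfold discToOffDiag
  fun_prop (disch := intro; positivity)

lemma continuousOn_offDiagToDisc : ContinuousOn (offDiagToDisc : V × V → V × V) {q | q.1 ≠ q.2} := by
  unfold offDiagToDisc
  fun_prop (disch := first
    | (intro q hq; exact norm_ne_zero_iff.2 (sub_ne_zero.2 hq))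
    | (intro q _; positivity))

noncomputable def discToOffDiagHomeomorph :
    {p : V × V // ‖p.1‖ = 1 ∧ ⟪p.1, p.2⟫ = 0 ∧ ‖p.2‖ < 1} ≃ₜ
      {q : V × V // ‖q.1‖ = 1 ∧ ‖q.2‖ = 1 ∧ q.1 ≠ q.2} where
  toFun p := ⟨discToOffDiag p.1, norm_discToOffDiag_fst p.2.1 p.2.2.1,
    norm_discToOffDiag_snd p.2.1 p.2.2.1, discToOffDiag_fst_ne_snd p.2.1 p.2.2.2⟩
  invFun q := ⟨offDiagToDisc q.1, offDiagToDisc_mem q.2.1 q.2.2.1 q.2.2.2⟩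
  left_inv p := Subtype.ext (offDiagToDisc_discToOffDiag p.2.1 p.2.2.2)
  right_inv q := Subtype.ext (discToOffDiag_offDiagToDisc q.2.1 q.2.2.1 q.2.2.2)
  continuous_toFun := (continuous_discToOffDiag.comp continuous_subtype_val).subtype_mk _
  continuous_invFun :=
    (continuousOn_offDiagToDisc.comp_continuous continuous_subtype_val
      fun q => q.2.2.2).subtype_mk _

end DiscBundle

theorem stmt0_general {V : Type*} [NormedAddCommGroup V] [InnerProductSpace ℝ V]
    (P : V → V → V × V)
    (hP : ∀ u w : V, P u w =
      (((1 + ‖w‖ ^ 2)⁻¹ : ℝ) • ((1 - ‖w‖ ^ 2) • u + (2 : ℝ) • w),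
       ((1 + ‖w‖ ^ 2)⁻¹ : ℝ) • ((‖w‖ ^ 2 - 1) • u + (2 : ℝ) • w))) :
    (∀ u w : V, ‖u‖ = 1 → ⟪u, w⟫ = 0 → ‖w‖ ≤ 1 →
        ‖(P u w).1‖ = 1 ∧ ‖(P u w).2‖ = 1) ∧
    (∀ u w : V, ‖u‖ = 1 → ⟪u, w⟫ = 0 → ‖w‖ = 1 → P u w = (w, w)) ∧
    (∃ h : {p : V × V // ‖p.1‖ = 1 ∧ ⟪p.1, p.2⟫ = 0 ∧ ‖p.2‖ < 1} ≃ₜ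
        {q : V × V // ‖q.1‖ = 1 ∧ ‖q.2‖ = 1 ∧ q.1 ≠ q.2},
      ∀ p, (h p : V × V) = P (p : V × V).1 (p : V × V).2) := by
  have hπ : ∀ u w, P u w = discToOffDiag (u, w) := hP
  refine ⟨fun u w hu huw _ => ?_, fun u w _ _ hw => ?_, discToOffDiagHomeomorph, fun p => ?_⟩
  · rw [hπ]
    exact ⟨norm_discToOffDiag_fst hu huw, norm_discToOffDiag_snd hu huw⟩
  · rw [hπ, discToOffDiag_of_norm_eq_one u hw]
  · rw [hπ]
    rfl

/-- Lemma 2.1: the map `π` identifies the open disc bundle of `ζ̃` over `S(V)`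
with the complement of the diagonal in `S(V) × S(V)`. -/
theorem stmt0 {V : Type*} [NormedAddCommGroup V] [InnerProductSpace ℝ V]
    [FiniteDimensional ℝ V] {n : ℕ} (hn : 1 ≤ n) (hdim : Module.finrank ℝ V = n + 1)
    (P : V → V → V × V)
    (hP : ∀ u w : V, P u w =
      (((1 + ‖w‖ ^ 2)⁻¹ : ℝ) • ((1 - ‖w‖ ^ 2) • u + (2 : ℝ) • w),
       ((1 + ‖w‖ ^ 2)⁻¹ : ℝ) • ((‖w‖ ^ 2 - 1) • u + (2 : ℝ) • w))) :
    (∀ u w : V, ‖u‖ = 1 → ⟪u, w⟫ = 0 → ‖w‖ ≤ 1 →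
        ‖(P u w).1‖ = 1 ∧ ‖(P u w).2‖ = 1) ∧
    (∀ u w : V, ‖u‖ = 1 → ⟪u, w⟫ = 0 → ‖w‖ = 1 → P u w = (w, w)) ∧
    (∃ h : {p : V × V // ‖p.1‖ = 1 ∧ ⟪p.1, p.2⟫ = 0 ∧ ‖p.2‖ < 1} ≃ₜ
        {q : V × V // ‖q.1‖ = 1 ∧ ‖q.2‖ = 1 ∧ q.1 ≠ q.2},
      ∀ p, (h p : V × V) = P (p : V × V).1 (p : V × V).2) :=
  stmt0_general P hP
end

section
/- Let 𝕂 be ℝ or ℂ and let V be a finite-dimensional inner product space over 𝕂 of dimension n+1 ≥ 2. For one-dimensional 𝕂-subspaces L, M ⊆ V with M ⊆ L^⊥, a 𝕂-linear map a : L → M with operator norm ‖a‖, and its adjoint a* : M → L (characterized by ⟨a x, y⟩ = ⟨x, a* y⟩ for x ∈ L, y ∈ M), put π(L,M,a) = ( {x + a x : x ∈ L}, {y + a* y : y ∈ M} ). Then: (i) both components of π(L,M,a) are one-dimensional 𝕂-subspaces of V whenever ‖a‖ ≤ 1; (ii) if ‖a‖ = 1 the two components are equal; (iii) the assignment (L,M,a)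 ↦ π(L,M,a), restricted to triples with ‖a‖ < 1, is a bijection onto the set of ordered pairs (L′,M′) of distinct one-dimensional 𝕂-subspaces of V. -/
/-- A triple `(L, M, a)` consisting of two orthogonal one-dimensional
`𝕂`-subspaces of `V` together with a `𝕂`-linear map `a : L → M`. -/
structure OrthLinePair (𝕂 : Type*) [RCLike 𝕂] (V : Type*) [NormedAddCommGroup V]
    [InnerProductSpace 𝕂 V] [FiniteDimensional 𝕂 V] where
  L : Submodule 𝕂 V
  M : Submodule 𝕂 V
  hL : Module.finrank 𝕂 L = 1
  hM : Module.finrank 𝕂 M = 1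
  orth : M ≤ Lᗮ
  a : L →L[𝕂] M

/-- The map `π(L,M,a) = ({x + a x : x ∈ L}, {y + a* y : y ∈ M})`, where `a*` is the
adjoint of `a`. -/
noncomputable def OrthLinePair.pi {𝕂 : Type*} [RCLike 𝕂] {V : Type*} [NormedAddCommGroup V]
    [InnerProductSpace 𝕂 V] [FiniteDimensional 𝕂 V] (p : OrthLinePair 𝕂 V) :
    Submodule 𝕂 V × Submodule 𝕂 V :=
  (LinearMap.range (p.L.subtype + p.M.subtype ∘ₗ p.a.toLinearMap),
   LinearMap.range (p.M.subtype + p.L.subtype ∘ₗ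
      (ContinuousLinearMap.adjoint p.a).toLinearMap))

/-! Choose unit vectors `u ∈ L`, `v ∈ M` and write `a u = c • v`. Then `‖a‖ = ‖c‖`,
`a* v = c̄ • u` and `π(L, M, a) = (𝕂 ∙ (u + c • v), 𝕂 ∙ (v + c̄ • u))`, from which (i) and (ii)
are immediate.

Injectivity comes from the identity `P_{π₁} - P_{π₂} = (1 - ‖a‖²) / (1 + ‖a‖²) • (P_L - P_M)`
between orthogonal projections. For `‖a‖ < 1` the factor is positive, and a positive multiple of
`P_L - P_M` determines `L`: it consists of the `x` at which `re ⟪(P_L - P_M) x, x⟫` attains its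
largest possible value `‖x‖²`. Likewise for `M`, and `a` is then recovered from its graph `π₁`.

For surjectivity, let unit vectors `w`, `z` span distinct lines, so that `s = ⟪w, z⟫` has
`‖s‖ < 1`, and let `μ = s / (1 + √(1 - ‖s‖²))`, a root of `μ² s̄ - 2μ + s = 0`. With `c = μ̄`,
the vectors `w - c • z` and `z - c̄ • w` are orthogonal of equal length; normalised, they are the
`u`, `v` we need.
-/

open Module Submodule RCLike ComplexConjugate
open scoped InnerProductSpace

section Scalars

variable {𝕂 : Type*} [RCLike 𝕂]

theorem RCLike.exists_norm_lt_one_sq_mul_conj_sub_two_mul_add_eq_zero {s : 𝕂} (hs : ‖s‖ < 1) :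
    ∃ μ : 𝕂, ‖μ‖ < 1 ∧ μ ^ 2 * conj s - 2 * μ + s = 0 := by
  set r := √(1 - ‖s‖ ^ 2)
  have hr : r ^ 2 = 1 - ‖s‖ ^ 2 := Real.sq_sqrt (by nlinarith [norm_nonneg s])
  have hr0 : 0 ≤ r := Real.sqrt_nonneg _
  refine ⟨s / (1 + r : ℝ), ?_, ?_⟩
  · rw [norm_div, norm_ofReal, abs_of_pos (by positivity), div_lt_one (by positivity)]
    linarith
  · have h1 : ((1 + r : ℝ) : 𝕂) ≠ 0 := ofReal_ne_zero.mpr (by positivity)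
    have hss : s * conj s = ((1 - r ^ 2 : ℝ) : 𝕂) := by rw [mul_conj, hr]; push_cast; ring
    field_simp
    linear_combination (norm := (push_cast; ring)) s * hss

theorem one_sub_sq_div_one_add_sq_pos {t : ℝ} (h₀ : 0 ≤ t) (h₁ : t < 1) :
    0 < (1 - t ^ 2) / (1 + t ^ 2) :=
  div_pos (by nlinarith) (by positivity)

end Scalars

section Submodules

variable {R E : Type*} [Ring R] [AddCommGroup E] [Module R E] {L M : Submodule R E}

theorem LinearMap.eq_of_range_subtype_add_eq (hLM : Disjoint L M) {f g : L →ₗ[R] M}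
    (h : range (L.subtype + M.subtype ∘ₗ f) = range (L.subtype + M.subtype ∘ₗ g)) : f = g := by
  ext x
  obtain ⟨y, hy⟩ : (x : E) + f x ∈ range (L.subtype + M.subtype ∘ₗ g) := h ▸ ⟨x, rfl⟩
  simp only [LinearMap.add_apply, subtype_apply, LinearMap.coe_comp, Function.comp_apply] at hy
  have hyx : (y : E) - x = f x - g y := by rw [sub_eq_sub_iff_add_eq_add, hy, add_comm]
  have hyx0 : (y : E) - x = 0 :=
    disjoint_def.mp hLM _ (sub_mem y.2 x.2) (hyx ▸ sub_mem (f x).2 (g y).2)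
  obtain rfl : y = x := Subtype.ext (sub_eq_zero.mp hyx0)
  exact sub_eq_zero.mp (hyx.symm.trans (sub_self _))

end Submodules

theorem Submodule.ne_bot_of_finrank_eq_one {K E : Type*} [DivisionRing K] [AddCommGroup E]
    [Module K E] {L : Submodule K E} [FiniteDimensional K L] (hL : finrank K L = 1) : L ≠ ⊥ := by
  rw [Ne, ← finrank_eq_zero, hL]
  exact one_ne_zero

section InnerProductSpace

variable {𝕂 : Type*} [RCLike 𝕂] {V : Type*} [NormedAddCommGroup V] [InnerProductSpace 𝕂 V]

section OrthonormalPair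

variable {u v : V} (hu : ‖u‖ = 1) (hv : ‖v‖ = 1) (huv : ⟪u, v⟫_𝕂 = 0)
include hu hv huv

theorem norm_add_smul_sq_of_orthonormal (c : 𝕂) : ‖u + c • v‖ ^ 2 = 1 + ‖c‖ ^ 2 := by
  rw [sq, norm_add_sq_eq_norm_sq_add_norm_sq_of_inner_eq_zero (𝕜 := 𝕂) _ _
    (by simp [inner_smul_right, huv]), norm_smul, hu, hv]
  ring

theorem starProjection_span_add_smul_sub (c : 𝕂) :
    (𝕂 ∙ (u + c • v)).starProjection - (𝕂 ∙ (v + conj c • u)).starProjection =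
      (((1 - ‖c‖ ^ 2) / (1 + ‖c‖ ^ 2) : ℝ) : 𝕂) •
        ((𝕂 ∙ u).starProjection - (𝕂 ∙ v).starProjection) := by
  have hw := norm_add_smul_sq_of_orthonormal hu hv huv c
  have hz := norm_add_smul_sq_of_orthonormal hv hu (inner_eq_zero_symm.mp huv) (conj c)
  rw [norm_conj] at hz
  have hN : (1 + (‖c‖ : 𝕂) ^ 2) ≠ 0 := by
    exact_mod_cast (show (1 + ‖c‖ ^ 2 : ℝ) ≠ 0 by positivity)
  ext x
  simp only [sub_apply, smul_apply, starProjection_singleton, starProjection_unit_singleton 𝕂 hu,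
    starProjection_unit_singleton 𝕂 hv, hw, hz, inner_add_left, inner_smul_left, conj_conj]
  push_cast
  rw [← RCLike.conj_mul] at hN ⊢
  match_scalars <;> field_simp <;> ring

end OrthonormalPair

section Projections

variable {L M L' M' : Submodule 𝕂 V} [L.HasOrthogonalProjection] [M.HasOrthogonalProjection]
  [L'.HasOrthogonalProjection] [M'.HasOrthogonalProjection]

theorem sub_starProjection_apply_of_mem (hLM : M ≤ Lᗮ) {x : V} (hx : x ∈ L) :
    (L.starProjection - M.starProjection) x = x := by
  have hxM : x ∈ Mᗮ := isOrtho_comm.mp hLM hx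
  rw [sub_apply, starProjection_eq_self_iff.mpr hx, (starProjection_apply_eq_zero_iff M).mpr hxM,
    sub_zero]

theorem re_inner_sub_starProjection_le_norm_starProjection_sq (x : V) :
    re ⟪(L.starProjection - M.starProjection) x, x⟫_𝕂 ≤ ‖L.starProjection x‖ ^ 2 := by
  rw [sub_apply, inner_sub_left, map_sub, re_inner_starProjection_eq_normSq,
    starProjection_apply L x, coe_norm]
  linarith [re_inner_starProjection_nonneg M x]

theorem re_inner_sub_starProjection_le_norm_sq (x : V) :
    re ⟪(L.starProjection - M.starProjection) x, x⟫_𝕂 ≤ ‖x‖ ^ 2 :=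
  (re_inner_sub_starProjection_le_norm_starProjection_sq x).trans
    (pow_le_pow_left₀ (norm_nonneg _) (L.norm_starProjection_apply_le x) 2)

theorem mem_of_norm_sq_le_re_inner_sub_starProjection {x : V}
    (h : ‖x‖ ^ 2 ≤ re ⟪(L.starProjection - M.starProjection) x, x⟫_𝕂) : x ∈ L := by
  have h₁ := re_inner_sub_starProjection_le_norm_starProjection_sq (L := L) (M := M) x
  have h₂ := L.norm_starProjection_apply_le x
  rw [mem_iff_norm_starProjection]
  nlinarith [norm_nonneg x, norm_nonneg (L.starProjection x)]

variable {κ κ' : ℝ}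

theorem mul_norm_sq_eq_of_smul_sub_starProjection_eq (hLM : M ≤ Lᗮ)
    (h : (κ : 𝕂) • (L.starProjection - M.starProjection) =
      (κ' : 𝕂) • (L'.starProjection - M'.starProjection)) {x : V} (hx : x ∈ L) :
    κ * ‖x‖ ^ 2 = κ' * re ⟪(L'.starProjection - M'.starProjection) x, x⟫_𝕂 := by
  have := congrArg (fun T : V →L[𝕂] V => re ⟪T x, x⟫_𝕂) h
  simpa only [smul_apply, sub_starProjection_apply_of_mem hLM hx, inner_smul_left, conj_ofReal,
    re_ofReal_mul, inner_self_eq_norm_sq] using this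

theorem le_of_smul_sub_starProjection_eq (hκ' : 0 < κ') (hLM : M ≤ Lᗮ) (hL : L ≠ ⊥)
    (h : (κ : 𝕂) • (L.starProjection - M.starProjection) =
      (κ' : 𝕂) • (L'.starProjection - M'.starProjection)) : κ ≤ κ' := by
  obtain ⟨x, hx, hx0⟩ := exists_mem_ne_zero_of_ne_bot hL
  have hx2 : 0 < ‖x‖ ^ 2 := by positivity
  have heq := mul_norm_sq_eq_of_smul_sub_starProjection_eq hLM h hx
  have hle := re_inner_sub_starProjection_le_norm_sq (L := L') (M := M') x
  nlinarith

theorem le_of_smul_sub_starProjection_eq_of_le (hκ' : 0 < κ') (hκκ' : κ' ≤ κ)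
    (hLM : M ≤ Lᗮ) (h : (κ : 𝕂) • (L.starProjection - M.starProjection) =
      (κ' : 𝕂) • (L'.starProjection - M'.starProjection)) : L ≤ L' := by
  intro x hx
  have heq := mul_norm_sq_eq_of_smul_sub_starProjection_eq hLM h hx
  apply mem_of_norm_sq_le_re_inner_sub_starProjection (M := M')
  nlinarith [sq_nonneg ‖x‖]

theorem eq_of_smul_sub_starProjection_eq (hκ : 0 < κ) (hκ' : 0 < κ')
    (hLM : M ≤ Lᗮ) (hLM' : M' ≤ L'ᗮ) (hL : L ≠ ⊥) (hL' : L' ≠ ⊥)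
    (h : (κ : 𝕂) • (L.starProjection - M.starProjection) =
      (κ' : 𝕂) • (L'.starProjection - M'.starProjection)) : L = L' := by
  have hκκ' := le_antisymm (le_of_smul_sub_starProjection_eq hκ' hLM hL h)
    (le_of_smul_sub_starProjection_eq hκ hLM' hL' h.symm)
  exact le_antisymm (le_of_smul_sub_starProjection_eq_of_le hκ' hκκ'.ge hLM h)
    (le_of_smul_sub_starProjection_eq_of_le hκ hκκ'.le hLM' h.symm)

end Projections

section Lines

theorem Submodule.exists_norm_eq_one_eq_span_singleton {L : Submodule 𝕂 V}
    [FiniteDimensional 𝕂 L] (hL : finrank 𝕂 L = 1) : ∃ u : V, ‖u‖ = 1 ∧ L = 𝕂 ∙ u := by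
  obtain ⟨x, hx, hx0⟩ := exists_mem_ne_zero_of_ne_bot (ne_bot_of_finrank_eq_one hL)
  refine ⟨(‖x‖⁻¹ : 𝕂) • x, norm_smul_inv_norm hx0, ?_⟩
  rw [span_singleton_smul_eq (by simpa using hx0)]
  exact (eq_of_le_of_finrank_eq ((span_singleton_le_iff_mem x L).mpr hx)
    (by rw [finrank_span_singleton hx0, hL])).symm

variable {u v : V}

theorem eq_inner_smul_of_mem_span_singleton (hu : ‖u‖ = 1) {x : V} (hx : x ∈ 𝕂 ∙ u) :
    x = ⟪u, x⟫_𝕂 • u := by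
  rw [← starProjection_unit_singleton 𝕂 hu, starProjection_eq_self_iff.mpr hx]

theorem LinearMap.range_eq_span_singleton_apply {E : Type*} [AddCommGroup E] [Module 𝕂 E]
    (f : (𝕂 ∙ u) →ₗ[𝕂] E) : range f = 𝕂 ∙ f ⟨u, mem_span_singleton_self u⟩ := by
  refine le_antisymm ?_ ((span_singleton_le_iff_mem _ _).mpr ⟨_, rfl⟩)
  rintro _ ⟨⟨x, hx⟩, rfl⟩
  obtain ⟨t, rfl⟩ := mem_span_singleton.mp hx
  exact mem_span_singleton.mpr ⟨t, (f.map_smul t ⟨u, _⟩).symm⟩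

variable (hu : ‖u‖ = 1) (hv : ‖v‖ = 1) {a : (𝕂 ∙ u) →L[𝕂] (𝕂 ∙ v)} {c : 𝕂}
  (ha : a ⟨u, mem_span_singleton_self u⟩ = c • ⟨v, mem_span_singleton_self v⟩)
include hu hv ha

theorem ContinuousLinearMap.norm_eq_of_apply_eq_smul : ‖a‖ = ‖c‖ := by
  refine le_antisymm (a.opNorm_le_bound (norm_nonneg c) fun ⟨x, hx⟩ => ?_) ?_
  · obtain ⟨t, rfl⟩ := mem_span_singleton.mp hx
    rw [show (⟨t • u, hx⟩ : 𝕂 ∙ u) = t • ⟨u, mem_span_singleton_self u⟩ from rfl, map_smul, ha]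
    simp [norm_smul, hu, hv, mul_comm]
  · simpa [ha, norm_smul, hu, hv] using a.le_opNorm ⟨u, mem_span_singleton_self u⟩

theorem ContinuousLinearMap.adjoint_apply_eq_conj_smul :
    a.adjoint ⟨v, mem_span_singleton_self v⟩ = conj c • ⟨u, mem_span_singleton_self u⟩ := by
  set y := a.adjoint ⟨v, mem_span_singleton_self v⟩
  have hy : ⟪u, (y : V)⟫_𝕂 = conj c := by
    rw [← coe_inner (x := ⟨u, mem_span_singleton_self u⟩), a.adjoint_inner_right, ha,
      inner_smul_left, coe_inner, inner_self_eq_norm_sq_to_K, hv]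
    simp
  exact Subtype.ext ((eq_inner_smul_of_mem_span_singleton hu y.2).trans (by rw [hy]; rfl))

end Lines

section DistinctLines

variable {w z : V}

theorem norm_inner_lt_one_of_span_singleton_ne (hw : ‖w‖ = 1) (hz : ‖z‖ = 1)
    (hwz : (𝕂 ∙ w) ≠ 𝕂 ∙ z) : ‖⟪w, z⟫_𝕂‖ < 1 := by
  refine (norm_inner_le_norm (𝕜 := 𝕂) w z).trans_eq (by rw [hw, hz, one_mul]) |>.lt_of_ne ?_
  intro h
  have hw0 : w ≠ 0 := ne_zero_of_norm_ne_zero (by simp [hw])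
  have hz0 : z ≠ 0 := ne_zero_of_norm_ne_zero (by simp [hz])
  obtain ⟨r, hr, rfl⟩ := (norm_inner_eq_norm_iff hw0 hz0).mp (by rw [h, hw, hz, mul_one])
  exact hwz (span_singleton_smul_eq (isUnit_iff_ne_zero.mpr hr) w).symm

theorem exists_inner_sub_smul_eq_zero (hw : ‖w‖ = 1) (hz : ‖z‖ = 1) (hwz : ‖⟪w, z⟫_𝕂‖ < 1) :
    ∃ c : 𝕂, ‖c‖ < 1 ∧ ⟪w - c • z, z - conj c • w⟫_𝕂 = 0 ∧
      ‖w - c • z‖ = ‖z - conj c • w‖ := by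
  obtain ⟨μ, hμ, hroot⟩ := exists_norm_lt_one_sq_mul_conj_sub_two_mul_add_eq_zero hwz
  have hww : ⟪w, w⟫_𝕂 = 1 := by rw [inner_self_eq_norm_sq_to_K, hw]; simp
  have hzz : ⟪z, z⟫_𝕂 = 1 := by rw [inner_self_eq_norm_sq_to_K, hz]; simp
  have hzw : ⟪z, w⟫_𝕂 = conj ⟪w, z⟫_𝕂 := (inner_conj_symm z w).symm
  refine ⟨conj μ, by rwa [norm_conj], ?_, ?_⟩
  · simp only [inner_sub_left, inner_sub_right, inner_smul_left, inner_smul_right, hww, hzz, hzw,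
      conj_conj]
    linear_combination hroot
  · have h : ⟪w - conj μ • z, w - conj μ • z⟫_𝕂 = ⟪z - μ • w, z - μ • w⟫_𝕂 := by
      simp only [inner_sub_left, inner_sub_right, inner_smul_left, inner_smul_right, hww, hzz,
        hzw, conj_conj]
      ring
    rw [inner_self_eq_norm_sq_to_K, inner_self_eq_norm_sq_to_K] at h
    rw [conj_conj]
    exact (pow_left_inj₀ (norm_nonneg _) (norm_nonneg _) two_ne_zero).mp (by exact_mod_cast h)

theorem exists_orthonormal_span_add_smul_eq (hw : ‖w‖ = 1) (hz : ‖z‖ = 1)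
    (hwz : ‖⟪w, z⟫_𝕂‖ < 1) :
    ∃ (u v : V) (c : 𝕂), ‖u‖ = 1 ∧ ‖v‖ = 1 ∧ ⟪u, v⟫_𝕂 = 0 ∧ ‖c‖ < 1 ∧
      𝕂 ∙ (u + c • v) = 𝕂 ∙ w ∧ 𝕂 ∙ (v + conj c • u) = 𝕂 ∙ z := by
  obtain ⟨c, hc, hxy, hnorm⟩ := exists_inner_sub_smul_eq_zero hw hz hwz
  have hx0 : w - c • z ≠ 0 := by
    intro h
    have := congrArg norm (sub_eq_zero.mp h)
    rw [norm_smul, hw, hz, mul_one] at this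
    linarith
  have hy0 : z - conj c • w ≠ 0 := norm_ne_zero_iff.mp (hnorm ▸ norm_ne_zero_iff.mpr hx0)
  set N : 𝕂 := (‖w - c • z‖ : 𝕂)
  have hk : N⁻¹ * (1 - c * conj c) ≠ 0 := by
    refine mul_ne_zero (inv_ne_zero (ofReal_ne_zero.mpr (norm_ne_zero_iff.mpr hx0))) ?_
    rw [mul_conj, sub_ne_zero]
    exact_mod_cast (by nlinarith [norm_nonneg c] : (1 : ℝ) ≠ ‖c‖ ^ 2)
  refine ⟨N⁻¹ • (w - c • z), N⁻¹ • (z - conj c • w), c, norm_smul_inv_norm hx0, ?_,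
    by simp [inner_smul_left, inner_smul_right, hxy], hc, ?_, ?_⟩
  · simpa only [N, hnorm] using norm_smul_inv_norm (𝕜 := 𝕂) hy0
  · rw [← span_singleton_smul_eq (isUnit_iff_ne_zero.mpr hk) w]
    congr 2
    module
  · rw [← span_singleton_smul_eq (isUnit_iff_ne_zero.mpr hk) z]
    congr 2
    module

end DistinctLines

namespace OrthLinePair

variable [FiniteDimensional 𝕂 V] {u v : V} {c : 𝕂}

theorem pi_mk_span_singleton (hu : ‖u‖ = 1) (hv : ‖v‖ = 1) {hL : finrank 𝕂 (𝕂 ∙ u) = 1}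
    {hM : finrank 𝕂 (𝕂 ∙ v) = 1} {horth : (𝕂 ∙ v) ≤ (𝕂 ∙ u)ᗮ} {a : (𝕂 ∙ u) →L[𝕂] (𝕂 ∙ v)}
    (ha : a ⟨u, mem_span_singleton_self u⟩ = c • ⟨v, mem_span_singleton_self v⟩) :
    (OrthLinePair.mk _ _ hL hM horth a).pi = (𝕂 ∙ (u + c • v), 𝕂 ∙ (v + conj c • u)) := by
  simp only [pi, LinearMap.range_eq_span_singleton_apply, LinearMap.add_apply,
    LinearMap.coe_comp, Function.comp_apply, ContinuousLinearMap.coe_coe,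
    a.adjoint_apply_eq_conj_smul hu hv ha, ha, subtype_apply, SetLike.val_smul]

theorem exists_orthonormal (p : OrthLinePair 𝕂 V) :
    ∃ (u v : V) (c : 𝕂), ‖u‖ = 1 ∧ ‖v‖ = 1 ∧ ⟪u, v⟫_𝕂 = 0 ∧ p.L = 𝕂 ∙ u ∧ p.M = 𝕂 ∙ v ∧
      ‖p.a‖ = ‖c‖ ∧ p.pi = (𝕂 ∙ (u + c • v), 𝕂 ∙ (v + conj c • u)) := by
  obtain ⟨L, M, hL, hM, horth, a⟩ := p
  obtain ⟨u, hu, rfl⟩ := exists_norm_eq_one_eq_span_singleton hL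
  obtain ⟨v, hv, rfl⟩ := exists_norm_eq_one_eq_span_singleton hM
  obtain ⟨c, hc⟩ := mem_span_singleton.mp (a ⟨u, mem_span_singleton_self u⟩).2
  have ha : a ⟨u, mem_span_singleton_self u⟩ = c • ⟨v, mem_span_singleton_self v⟩ :=
    Subtype.ext hc.symm
  exact ⟨u, v, c, hu, hv,
    mem_orthogonal_singleton_iff_inner_right.mp (horth (mem_span_singleton_self v)), rfl, rfl,
    a.norm_eq_of_apply_eq_smul hu hv ha, pi_mk_span_singleton hu hv ha⟩

theorem exists_norm_eq_and_pi_eq (hu : ‖u‖ = 1) (hv : ‖v‖ = 1) (huv : ⟪u, v⟫_𝕂 = 0) (c : 𝕂) :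
    ∃ p : OrthLinePair 𝕂 V, ‖p.a‖ = ‖c‖ ∧ p.pi = (𝕂 ∙ (u + c • v), 𝕂 ∙ (v + conj c • u)) := by
  set a : (𝕂 ∙ u) →L[𝕂] (𝕂 ∙ v) := c • (ContinuousLinearMap.toSpanSingleton 𝕂
    ⟨v, mem_span_singleton_self v⟩ ∘L innerSL 𝕂 u ∘L (𝕂 ∙ u).subtypeL)
  have ha : a ⟨u, mem_span_singleton_self u⟩ = c • ⟨v, mem_span_singleton_self v⟩ := by
    simp [a, inner_self_eq_norm_sq_to_K, hu]
  exact ⟨⟨_, _, finrank_span_singleton (ne_zero_of_norm_ne_zero (by simp [hu])),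
    finrank_span_singleton (ne_zero_of_norm_ne_zero (by simp [hv])),
    (span_singleton_le_iff_mem _ _).mpr (mem_orthogonal_singleton_iff_inner_right.mpr huv), a⟩,
    a.norm_eq_of_apply_eq_smul hu hv ha, pi_mk_span_singleton hu hv ha⟩

theorem finrank_pi (p : OrthLinePair 𝕂 V) :
    finrank 𝕂 p.pi.1 = 1 ∧ finrank 𝕂 p.pi.2 = 1 := by
  obtain ⟨u, v, c, hu, hv, huv, -, -, -, hpi⟩ := p.exists_orthonormal
  have hne {x y : V} {d : 𝕂} (h : ‖x + d • y‖ ^ 2 = 1 + ‖d‖ ^ 2) : x + d • y ≠ 0 := by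
    intro h0
    rw [h0, norm_zero] at h
    nlinarith [norm_nonneg d]
  rw [hpi]
  exact ⟨finrank_span_singleton (hne (norm_add_smul_sq_of_orthonormal hu hv huv c)),
    finrank_span_singleton
      (hne (norm_add_smul_sq_of_orthonormal hv hu (inner_eq_zero_symm.mp huv) (conj c)))⟩

theorem pi_fst_eq_pi_snd (p : OrthLinePair 𝕂 V) (h : ‖p.a‖ = 1) : p.pi.1 = p.pi.2 := by
  obtain ⟨u, v, c, -, -, -, -, -, hc, hpi⟩ := p.exists_orthonormal
  rw [hc] at h
  have hcc : conj c * c = 1 := by rw [RCLike.conj_mul, h]; simp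
  have hc0 : conj c ≠ 0 := fun h0 => by simp [h0] at hcc
  rw [hpi, ← span_singleton_smul_eq (isUnit_iff_ne_zero.mpr hc0) (u + c • v), smul_add, smul_smul,
    hcc, one_smul, add_comm]

theorem starProjection_pi_fst_sub_pi_snd (p : OrthLinePair 𝕂 V) :
    p.pi.1.starProjection - p.pi.2.starProjection =
      (((1 - ‖p.a‖ ^ 2) / (1 + ‖p.a‖ ^ 2) : ℝ) : 𝕂) •
        (p.L.starProjection - p.M.starProjection) := by
  obtain ⟨u, v, c, hu, hv, huv, hL, hM, hc, hpi⟩ := p.exists_orthonormal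
  rw [hpi, hc, hL, hM]
  exact starProjection_span_add_smul_sub hu hv huv c

theorem pi_fst_ne_pi_snd (p : OrthLinePair 𝕂 V) (h : ‖p.a‖ < 1) : p.pi.1 ≠ p.pi.2 := by
  intro heq
  obtain ⟨x, hx, hx0⟩ := exists_mem_ne_zero_of_ne_bot (ne_bot_of_finrank_eq_one p.hL)
  have := congrArg (· x) p.starProjection_pi_fst_sub_pi_snd
  simp only [heq, sub_self, zero_apply, smul_apply, sub_starProjection_apply_of_mem p.orth hx]
    at this
  have hκ := (one_sub_sq_div_one_add_sq_pos (norm_nonneg p.a) h).ne'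
  exact hx0 (smul_eq_zero.mp this.symm |>.resolve_left (ofReal_ne_zero.mpr hκ))

theorem ext_of_pi_fst_eq {p q : OrthLinePair 𝕂 V} (hL : p.L = q.L) (hM : p.M = q.M)
    (h : p.pi.1 = q.pi.1) : p = q := by
  obtain ⟨L, M, hL₁, hM₁, horth, a⟩ := p
  obtain ⟨L', M', hL₁', hM₁', horth', a'⟩ := q
  subst hL hM
  obtain rfl : a = a' := ContinuousLinearMap.coe_injective
    (LinearMap.eq_of_range_subtype_add_eq ((orthogonal_disjoint L).mono_right horth) h)
  rfl

theorem injOn_pi : Set.InjOn pi {p : OrthLinePair 𝕂 V | ‖p.a‖ < 1} := by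
  intro p hp q hq hpq
  have hκ {r : OrthLinePair 𝕂 V} (hr : ‖r.a‖ < 1) :=
    one_sub_sq_div_one_add_sq_pos (norm_nonneg r.a) hr
  have h := q.starProjection_pi_fst_sub_pi_snd
  rw [← hpq, starProjection_pi_fst_sub_pi_snd] at h
  have hL := eq_of_smul_sub_starProjection_eq (hκ hp) (hκ hq) p.orth q.orth
    (ne_bot_of_finrank_eq_one p.hL) (ne_bot_of_finrank_eq_one q.hL) h
  have hM := eq_of_smul_sub_starProjection_eq (hκ hp) (hκ hq) (isOrtho_comm.mp p.orth)
    (isOrtho_comm.mp q.orth) (ne_bot_of_finrank_eq_one p.hM) (ne_bot_of_finrank_eq_one q.hM)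
    (by rw [← neg_sub p.L.starProjection, smul_neg, h, ← smul_neg, neg_sub])
  exact ext_of_pi_fst_eq hL hM (congrArg Prod.fst hpq)

theorem surjOn_pi : Set.SurjOn pi {p : OrthLinePair 𝕂 V | ‖p.a‖ < 1}
    {q | finrank 𝕂 q.1 = 1 ∧ finrank 𝕂 q.2 = 1 ∧ q.1 ≠ q.2} := by
  rintro ⟨A, B⟩ ⟨hA, hB, hAB⟩
  obtain ⟨w, hw, rfl⟩ := exists_norm_eq_one_eq_span_singleton hA
  obtain ⟨z, hz, rfl⟩ := exists_norm_eq_one_eq_span_singleton hB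
  obtain ⟨u, v, c, hu, hv, huv, hc, hw', hz'⟩ :=
    exists_orthonormal_span_add_smul_eq hw hz (norm_inner_lt_one_of_span_singleton_ne hw hz hAB)
  obtain ⟨p, hpa, hpi⟩ := exists_norm_eq_and_pi_eq hu hv huv c
  exact ⟨p, show ‖p.a‖ < 1 from hpa ▸ hc, by rw [hpi, hw', hz']⟩

end OrthLinePair

end InnerProductSpace

theorem stmt1_general {𝕂 : Type*} [RCLike 𝕂] {V : Type*} [NormedAddCommGroup V]
    [InnerProductSpace 𝕂 V] [FiniteDimensional 𝕂 V] :
    (∀ p : OrthLinePair 𝕂 V, ∀ (x : p.L) (y : p.M),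
        (inner 𝕂 ((p.a x : V)) ((y : V)) : 𝕂) =
          inner 𝕂 ((x : V)) (((ContinuousLinearMap.adjoint p.a) y : V))) ∧
    (∀ p : OrthLinePair 𝕂 V, ‖p.a‖ ≤ 1 →
        Module.finrank 𝕂 p.pi.1 = 1 ∧ Module.finrank 𝕂 p.pi.2 = 1) ∧
    (∀ p : OrthLinePair 𝕂 V, ‖p.a‖ = 1 → p.pi.1 = p.pi.2) ∧
    Set.BijOn (fun p : OrthLinePair 𝕂 V => p.pi) {p | ‖p.a‖ < 1}
      {q : Submodule 𝕂 V × Submodule 𝕂 V |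
        Module.finrank 𝕂 q.1 = 1 ∧ Module.finrank 𝕂 q.2 = 1 ∧ q.1 ≠ q.2} :=
  ⟨fun p x y => (p.a.adjoint_inner_right x y).symm, fun p _ => p.finrank_pi,
    fun p => p.pi_fst_eq_pi_snd,
    fun p hp => ⟨p.finrank_pi.1, p.finrank_pi.2, p.pi_fst_ne_pi_snd hp⟩,
    OrthLinePair.injOn_pi, OrthLinePair.surjOn_pi⟩

/-- Lemma 3.1: `π` identifies the open disc bundle of `α̃` over the space of
orthogonal pairs of lines with the complement of the diagonal in
`P_𝕂(V) × P_𝕂(V)`.  The adjoint `a*` used in `OrthLinePair.pi` is characterized by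
`⟨a x, y⟩ = ⟨x, a* y⟩` (first conjunct). -/
theorem stmt1 {𝕂 : Type*} [RCLike 𝕂] {V : Type*} [NormedAddCommGroup V]
    [InnerProductSpace 𝕂 V] [FiniteDimensional 𝕂 V] {n : ℕ} (hn : 1 ≤ n)
    (hdim : Module.finrank 𝕂 V = n + 1) :
    (∀ p : OrthLinePair 𝕂 V, ∀ (x : p.L) (y : p.M),
        (inner 𝕂 ((p.a x : V)) ((y : V)) : 𝕂) =
          inner 𝕂 ((x : V)) (((ContinuousLinearMap.adjoint p.a) y : V))) ∧
    (∀ p : OrthLinePair 𝕂 V, ‖p.a‖ ≤ 1 →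
        Module.finrank 𝕂 p.pi.1 = 1 ∧ Module.finrank 𝕂 p.pi.2 = 1) ∧
    (∀ p : OrthLinePair 𝕂 V, ‖p.a‖ = 1 → p.pi.1 = p.pi.2) ∧
    Set.BijOn (fun p : OrthLinePair 𝕂 V => p.pi) {p | ‖p.a‖ < 1}
      {q : Submodule 𝕂 V × Submodule 𝕂 V |
        Module.finrank 𝕂 q.1 = 1 ∧ Module.finrank 𝕂 q.2 = 1 ∧ q.1 ≠ q.2} :=
  stmt1_general
end

section
/- Let V be a finite-dimensional real inner product space with dim V = n+1 ≥ 2, B a topological space and k ≥ 1. Suppose s_1, …, s_k : B × S(V) → V are continuous maps such that ⟨s_i(b,u), u⟩ = 0 for all (b,u) ∈ B × S(V) and all i, and for every (b,u) at least one s_i(b,u) ≠ 0. Then there exist open sets V_1, …, V_k covering B × S(V) and continuous maps ψ_i : [−1,1] × V_i → S(V) such that ψ_i(1,(b,u)) = u and ψ_i(−1,(b,u)) = −u for all (b,u) ∈ V_i. -/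
/-!
Where `s i (b, u) ≠ 0`, the unit vector `w = s i (b, u) / ‖s i (b, u)‖` is orthogonal to `u`, so
`θ ↦ cos θ • u + sin θ • w` runs along a great circle of `S(V)`; over `θ ∈ [0, π]` it is a
half great circle from `u` to `-u` depending continuously on `(b, u)`. The open sets
`{s i ≠ 0}` cover `B × S(V)` because the section is nowhere zero.
-/

open scoped RealInnerProductSpace

open Metric Real

section HalfGreatCircle

variable {V : Type*} [NormedAddCommGroup V] [InnerProductSpace ℝ V]

theorem norm_cos_smul_add_sin_smul {u w : V} (hu : ‖u‖ = 1) (hw : ‖w‖ = 1) (huw : ⟪u, w⟫ = 0)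
    (θ : ℝ) : ‖cos θ • u + sin θ • w‖ = 1 := by
  have horth : ⟪cos θ • u, sin θ • w⟫ = 0 := by
    rw [real_inner_smul_left, real_inner_smul_right, huw, mul_zero, mul_zero]
  have hsq : ‖cos θ • u + sin θ • w‖ ^ 2 = 1 := by
    rw [norm_add_sq_real, horth, mul_zero, add_zero, norm_smul, norm_smul, hu, hw, mul_one,
      mul_one, Real.norm_eq_abs, Real.norm_eq_abs, sq_abs, sq_abs, cos_sq_add_sin_sq]
  rwa [pow_eq_one_iff_of_nonneg (norm_nonneg _) two_ne_zero] at hsq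

/-- The parameter `t ∈ [-1, 1]` corresponds to the angle `π (1 - t) / 2` from `u`,
so `t = 1` gives `u` and `t = -1` gives `-u`. -/
noncomputable def halfGreatCircleVec (u v : V) (t : ℝ) : V :=
  cos (π * (1 - t) / 2) • u + sin (π * (1 - t) / 2) • (‖v‖⁻¹ • v)

theorem halfGreatCircleVec_mem_sphere {u : sphere (0 : V) 1} {v : V} (hv : v ≠ 0)
    (hvu : ⟪v, (u : V)⟫ = 0) (t : ℝ) : halfGreatCircleVec (u : V) v t ∈ sphere (0 : V) 1 := by
  have hw : ‖‖v‖⁻¹ • v‖ = 1 := norm_smul_inv_norm hv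
  have huw : ⟪(u : V), ‖v‖⁻¹ • v⟫ = 0 := by
    rw [real_inner_smul_right, real_inner_comm, hvu, mul_zero]
  rw [mem_sphere_zero_iff_norm]
  exact norm_cos_smul_add_sin_smul (norm_eq_of_mem_sphere u) hw huw _

open scoped Classical in
/-- The half great circle from `-u` to `u` in the direction of `v`; the junk value `u` is
used when `v` is zero or not tangent to the sphere at `u`. -/
noncomputable def halfGreatCircle (u : sphere (0 : V) 1) (v : V) (t : ℝ) : sphere (0 : V) 1 :=
  if h : v ≠ 0 ∧ ⟪v, (u : V)⟫ = 0 then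
    ⟨halfGreatCircleVec (u : V) v t, halfGreatCircleVec_mem_sphere h.1 h.2 t⟩
  else u

theorem coe_halfGreatCircle {u : sphere (0 : V) 1} {v : V} (hv : v ≠ 0) (hvu : ⟪v, (u : V)⟫ = 0)
    (t : ℝ) : (halfGreatCircle u v t : V) = halfGreatCircleVec (u : V) v t := by
  rw [halfGreatCircle, dif_pos ⟨hv, hvu⟩]

@[simp]
theorem halfGreatCircle_one (u : sphere (0 : V) 1) (v : V) : halfGreatCircle u v 1 = u := by
  unfold halfGreatCircle
  split_ifs
  · ext
    simp [halfGreatCircleVec]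
  · rfl

theorem halfGreatCircle_neg_one {u : sphere (0 : V) 1} {v : V} (hv : v ≠ 0)
    (hvu : ⟪v, (u : V)⟫ = 0) : halfGreatCircle u v (-1) = -u := by
  ext
  rw [coe_halfGreatCircle hv hvu, halfGreatCircleVec, show π * (1 - -1) / 2 = π by ring]
  simp

theorem continuousOn_halfGreatCircle {X : Type*} [TopologicalSpace X] {u : X → sphere (0 : V) 1}
    {v : X → V} {t : X → ℝ} (hu : Continuous u) (hv : Continuous v) (ht : Continuous t)
    (horth : ∀ x, ⟪v x, (u x : V)⟫ = 0) :
    ContinuousOn (fun x => halfGreatCircle (u x) (v x) (t x)) {x | v x ≠ 0} := by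
  rw [Topology.IsInducing.subtypeVal.continuousOn_iff]
  have hvec : ContinuousOn (fun x => halfGreatCircleVec (u x : V) (v x) (t x)) {x | v x ≠ 0} := by
    unfold halfGreatCircleVec
    refine ContinuousOn.add (by fun_prop) (ContinuousOn.smul (by fun_prop) ?_)
    exact ((continuous_norm.comp hv).continuousOn.inv₀ fun x hx => norm_ne_zero_iff.2 hx).smul
      hv.continuousOn
  exact hvec.congr fun x hx => coe_halfGreatCircle hx (horth x) (t x)

end HalfGreatCircle

theorem stmt2_general {V : Type*} [NormedAddCommGroup V] [InnerProductSpace ℝ V]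
    {B : Type*} [TopologicalSpace B] {k : ℕ}
    (s : Fin k → B × Metric.sphere (0 : V) 1 → V)
    (hscont : ∀ i, Continuous (s i))
    (hsorth : ∀ i p, ⟪s i p, ((p.2 : Metric.sphere (0 : V) 1) : V)⟫ = 0)
    (hsnz : ∀ p, ∃ i, s i p ≠ 0) :
    ∃ (U : Fin k → Set (B × Metric.sphere (0 : V) 1))
      (ψ : Fin k → ℝ × (B × Metric.sphere (0 : V) 1) → Metric.sphere (0 : V) 1),
      (∀ i, IsOpen (U i)) ∧
      (⋃ i, U i) = Set.univ ∧
      (∀ i, ContinuousOn (ψ i) (Set.Icc (-1 : ℝ) 1 ×ˢ U i)) ∧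
      (∀ i, ∀ p ∈ U i, ψ i (1, p) = p.2) ∧
      (∀ i, ∀ p ∈ U i, ψ i (-1, p) = -p.2) := by
  refine ⟨fun i => {p | s i p ≠ 0}, fun i x => halfGreatCircle x.2.2 (s i x.2) x.1,
    fun i => isOpen_ne_fun (hscont i) continuous_const, Set.iUnion_eq_univ_iff.2 hsnz,
    fun i => ?_, fun i p _ => halfGreatCircle_one _ _,
    fun i p hp => halfGreatCircle_neg_one hp (hsorth i p)⟩
  exact (continuousOn_halfGreatCircle (by fun_prop) ((hscont i).comp continuous_snd)
    continuous_fst fun x => hsorth i x.2).mono fun x hx => hx.2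

/-- Theorem 2.2, implication (1) ⟹ (2), for a trivialized bundle: a nowhere-zero
section of `kζ̃` yields an open cover of `B × S(V)` with fibrewise paths from `u`
to `-u`. -/
theorem stmt2 {V : Type*} [NormedAddCommGroup V] [InnerProductSpace ℝ V]
    [FiniteDimensional ℝ V] {n : ℕ} (hn : 1 ≤ n) (hdim : Module.finrank ℝ V = n + 1)
    {B : Type*} [TopologicalSpace B] {k : ℕ} (hk : 1 ≤ k)
    (s : Fin k → B × Metric.sphere (0 : V) 1 → V)
    (hscont : ∀ i, Continuous (s i))
    (hsorth : ∀ i p, ⟪s i p, ((p.2 : Metric.sphere (0 : V) 1) : V)⟫ = 0)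
    (hsnz : ∀ p, ∃ i, s i p ≠ 0) :
    ∃ (U : Fin k → Set (B × Metric.sphere (0 : V) 1))
      (ψ : Fin k → ℝ × (B × Metric.sphere (0 : V) 1) → Metric.sphere (0 : V) 1),
      (∀ i, IsOpen (U i)) ∧
      (⋃ i, U i) = Set.univ ∧
      (∀ i, ContinuousOn (ψ i) (Set.Icc (-1 : ℝ) 1 ×ˢ U i)) ∧
      (∀ i, ∀ p ∈ U i, ψ i (1, p) = p.2) ∧
      (∀ i, ∀ p ∈ U i, ψ i (-1, p) = -p.2) :=
  stmt2_general s hscont hsorth hsnz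
end

section
/- Let V be a finite-dimensional real inner product space with dim V = n+1 ≥ 2, B a topological space and k ≥ 1. Suppose s_1, …, s_k : B × S(V) → V are continuous maps such that ⟨s_i(b,u), u⟩ = 0 for all (b,u) and all i, and for every (b,u) at least one s_i(b,u) ≠ 0. Then there exist open sets U_0, U_1, …, U_k covering B × S(V) × S(V) and continuous maps φ_i : [−1,1] × U_i → S(V) such that φ_i(1,(b,u,v)) = u and φ_i(−1,(b,u,v)) = v for all (b,u,v) ∈ U_i, and φ_i(t,(b,u,u)) = u for all t ∈ [−1,1] whenever (b,u,u) ∈ U_i. (One may take U_0 = {(b,u,v) : v ≠ −u}, with motion planner the shortest-geodesic map, and U_i = {(b,u,v) : s_i(b,u) ≠ 0, ⟨u,v⟩ < 0} with motion planner the geodesic through s_i(b,u)/‖s_i(b,u)‖.) -/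
/-!
Over a pair `(u, v)` of unit vectors one moves along the chord from `u` to `v` or, when `u` and
`v` make an obtuse angle, along the broken line `u → s_i(b, u) → v`, and projects radially onto
the sphere.
The chord misses the origin as long as `v ≠ -u`. The broken line misses it whenever
`s_i(b, u) ≠ 0` and `⟪u, v⟫ < 0`: its inner product with `u` is positive on the first leg, and
on the second leg it is negative unless the path sits at the nonzero vector `s_i(b, u) ⊥ u`.
-/

open scoped RealInnerProductSpace
open Metric Set

section NormedSpace

variable {V : Type*} [NormedAddCommGroup V] [NormedSpace ℝ V]

/-- Radial projection of `x` onto the unit sphere, with junk value `u` at `x = 0`. -/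
noncomputable def sphereProj (x : V) (u : sphere (0 : V) 1) : sphere (0 : V) 1 :=
  open Classical in
  if h : x = 0 then u
  else ⟨‖x‖⁻¹ • x, by simp [norm_smul, inv_mul_cancel₀ (norm_ne_zero_iff.2 h)]⟩

lemma coe_sphereProj {x : V} (h : x ≠ 0) (u : sphere (0 : V) 1) :
    (sphereProj x u : V) = ‖x‖⁻¹ • x := by
  simp [sphereProj, h]

@[simp]
lemma sphereProj_coe (u v : sphere (0 : V) 1) : sphereProj (u : V) v = u := by
  have hu : ‖(u : V)‖ = 1 := norm_eq_of_mem_sphere u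
  ext
  rw [coe_sphereProj (ne_zero_of_mem_unit_sphere u), hu, inv_one, one_smul]

lemma ContinuousOn.sphereProj {X : Type*} [TopologicalSpace X] {f : X → V}
    {g : X → sphere (0 : V) 1} {s : Set X} (hf : ContinuousOn f s) (hf0 : ∀ x ∈ s, f x ≠ 0) :
    ContinuousOn (fun x => _root_.sphereProj (f x) (g x)) s := by
  rw [Topology.IsInducing.subtypeVal.continuousOn_iff]
  refine ((hf.norm.inv₀ fun x hx => norm_ne_zero_iff.2 (hf0 x hx)).smul hf).congr fun x hx => ?_
  exact coe_sphereProj (hf0 x hx) _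

noncomputable def chordPath (t : ℝ) (u v : V) : V :=
  ((1 + t) / 2) • u + ((1 - t) / 2) • v

lemma chordPath_ne_zero {t : ℝ} (ht : t ∈ Icc (-1 : ℝ) 1) {u v : V}
    (hu : ‖u‖ = 1) (hv : ‖v‖ = 1) (hvu : v ≠ -u) : chordPath t u v ≠ 0 := by
  intro h
  have ha : 0 ≤ (1 + t) / 2 := by linarith [ht.1]
  have hb : 0 ≤ (1 - t) / 2 := by linarith [ht.2]
  have hsmul : ((1 + t) / 2) • u = ((1 - t) / 2) • -v := by
    rw [smul_neg, eq_neg_iff_add_eq_zero]; exact h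
  have hab : (1 + t) / 2 = (1 - t) / 2 := by
    have hnorm := congrArg norm hsmul
    rwa [norm_smul, norm_smul, norm_neg, hu, hv, mul_one, mul_one, Real.norm_of_nonneg ha,
      Real.norm_of_nonneg hb] at hnorm
  have ht0 : t = 0 := by linarith
  rw [ht0, add_zero, sub_zero] at hsmul
  exact hvu (by rw [smul_right_injective V (by norm_num) hsmul, neg_neg])

lemma chordPath_one (u v : V) : chordPath 1 u v = u := by
  norm_num [chordPath]

lemma chordPath_neg_one (u v : V) : chordPath (-1) u v = v := by
  norm_num [chordPath]

lemma chordPath_self (t : ℝ) (u : V) : chordPath t u u = u := by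
  rw [chordPath, ← add_smul, show (1 + t) / 2 + (1 - t) / 2 = 1 by ring, one_smul]

end NormedSpace

section InnerProductSpace

variable {V : Type*} [NormedAddCommGroup V] [InnerProductSpace ℝ V]

/-- The broken line from `v` (at `t = -1`) through `w` (at `t = 0`) to `u` (at `t = 1`). -/
def detourPath (t : ℝ) (u w v : V) : V :=
  max t 0 • u + (1 - |t|) • w + max (-t) 0 • v

lemma detourPath_ne_zero (t : ℝ) {u w v : V} (hw : w ≠ 0) (hwu : ⟪w, u⟫ = 0)
    (huv : ⟪u, v⟫ < 0) : detourPath t u w v ≠ 0 := by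
  intro h
  have hu : 0 < ⟪u, u⟫ := real_inner_self_pos.2 fun hu => by simp [hu] at huv
  have hinner : max t 0 * ⟪u, u⟫ + max (-t) 0 * ⟪u, v⟫ = 0 := by
    simpa only [detourPath, inner_add_left, real_inner_smul_left, hwu, mul_zero, add_zero,
      real_inner_comm u v, inner_zero_left] using congrArg (fun x => ⟪x, u⟫) h
  rcases le_or_gt 0 t with ht | ht
  · rw [max_eq_left ht, max_eq_right (by linarith), zero_mul, add_zero,
      mul_eq_zero, or_iff_left hu.ne'] at hinner
    subst hinner
    exact hw (by simpa [detourPath] using h)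
  · rw [max_eq_right ht.le, max_eq_left (by linarith), zero_mul, zero_add] at hinner
    nlinarith

lemma detourPath_one (u w v : V) : detourPath 1 u w v = u := by
  norm_num [detourPath]

lemma detourPath_neg_one (u w v : V) : detourPath (-1) u w v = v := by
  norm_num [detourPath]

end InnerProductSpace

section FibrewisePlanners

variable {V B : Type*}

def IsFibrewisePlanner [NormedAddCommGroup V] [TopologicalSpace B]
    (U : Set (B × sphere (0 : V) 1 × sphere (0 : V) 1))
    (φ : ℝ × (B × sphere (0 : V) 1 × sphere (0 : V) 1) → sphere (0 : V) 1) : Prop :=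
  ContinuousOn φ (Icc (-1 : ℝ) 1 ×ˢ U) ∧
    (∀ p ∈ U, φ (1, p) = p.2.1) ∧
    (∀ p ∈ U, φ (-1, p) = p.2.2) ∧
    (∀ p ∈ U, p.2.1 = p.2.2 → ∀ t ∈ Icc (-1 : ℝ) 1, φ (t, p) = p.2.1)

lemma isFibrewisePlanner_sphereProj [NormedAddCommGroup V] [NormedSpace ℝ V]
    [TopologicalSpace B] {U : Set (B × sphere (0 : V) 1 × sphere (0 : V) 1)}
    {g : ℝ × (B × sphere (0 : V) 1 × sphere (0 : V) 1) → V} (hg : Continuous g)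
    (hg0 : ∀ t ∈ Icc (-1 : ℝ) 1, ∀ p ∈ U, g (t, p) ≠ 0)
    (hg_one : ∀ p ∈ U, g (1, p) = p.2.1) (hg_neg_one : ∀ p ∈ U, g (-1, p) = p.2.2)
    (hg_diag : ∀ p ∈ U, p.2.1 = p.2.2 → ∀ t ∈ Icc (-1 : ℝ) 1, g (t, p) = p.2.1) :
    IsFibrewisePlanner U fun q => sphereProj (g q) q.2.2.1 := by
  refine ⟨hg.continuousOn.sphereProj fun q hq => hg0 q.1 hq.1 q.2 hq.2, ?_, ?_, ?_⟩
  · intro p hp; simp [hg_one p hp]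
  · intro p hp; simp [hg_neg_one p hp]
  · intro p hp hdiag t ht; simp [hg_diag p hp hdiag t ht]

def nonAntipodalSet [NormedAddCommGroup V] :
    Set (B × sphere (0 : V) 1 × sphere (0 : V) 1) :=
  {p | (p.2.2 : V) ≠ -(p.2.1 : V)}

lemma isOpen_nonAntipodalSet [NormedAddCommGroup V] [TopologicalSpace B] :
    IsOpen (nonAntipodalSet : Set (B × sphere (0 : V) 1 × _)) :=
  isOpen_ne_fun (by fun_prop) (by fun_prop)

noncomputable def chordPlanner [NormedAddCommGroup V] [NormedSpace ℝ V]
    (q : ℝ × (B × sphere (0 : V) 1 × sphere (0 : V) 1)) : sphere (0 : V) 1 :=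
  sphereProj (chordPath q.1 (q.2.2.1 : V) q.2.2.2) q.2.2.1

lemma isFibrewisePlanner_chordPlanner [NormedAddCommGroup V] [NormedSpace ℝ V]
    [TopologicalSpace B] :
    IsFibrewisePlanner (nonAntipodalSet : Set (B × sphere (0 : V) 1 × _)) chordPlanner := by
  refine isFibrewisePlanner_sphereProj (by unfold chordPath; fun_prop)
    (fun t ht p hp => chordPath_ne_zero ht (norm_eq_of_mem_sphere _) (norm_eq_of_mem_sphere _) hp)
    (fun p _ => chordPath_one _ _) (fun p _ => chordPath_neg_one _ _) ?_
  intro p _ hdiag t _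
  rw [← hdiag, chordPath_self]

def obtuseSetOf [NormedAddCommGroup V] [InnerProductSpace ℝ V]
    (w : B × sphere (0 : V) 1 → V) : Set (B × sphere (0 : V) 1 × sphere (0 : V) 1) :=
  {p | w (p.1, p.2.1) ≠ 0 ∧ ⟪(p.2.1 : V), (p.2.2 : V)⟫ < 0}

lemma isOpen_obtuseSetOf [NormedAddCommGroup V] [InnerProductSpace ℝ V]
    [TopologicalSpace B] {w : B × sphere (0 : V) 1 → V} (hw : Continuous w) :
    IsOpen (obtuseSetOf w) :=
  (isOpen_ne_fun (hw.comp (by fun_prop)) continuous_const).inter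
    (isOpen_lt (f := fun p : B × sphere (0 : V) 1 × sphere (0 : V) 1 => ⟪(p.2.1 : V), p.2.2⟫)
      (by fun_prop) continuous_const)

noncomputable def detourPlanner [NormedAddCommGroup V] [InnerProductSpace ℝ V]
    (w : B × sphere (0 : V) 1 → V) (q : ℝ × (B × sphere (0 : V) 1 × sphere (0 : V) 1)) :
    sphere (0 : V) 1 :=
  sphereProj (detourPath q.1 (q.2.2.1 : V) (w (q.2.1, q.2.2.1)) q.2.2.2) q.2.2.1

lemma isFibrewisePlanner_detourPlanner [NormedAddCommGroup V]
    [InnerProductSpace ℝ V] [TopologicalSpace B] {w : B × sphere (0 : V) 1 → V}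
    (hw : Continuous w) (hw_orth : ∀ p, ⟪w p, (p.2 : V)⟫ = 0) :
    IsFibrewisePlanner (obtuseSetOf w) (detourPlanner w) := by
  refine isFibrewisePlanner_sphereProj (by unfold detourPath; fun_prop)
    (fun t _ p hp => detourPath_ne_zero t hp.1 (hw_orth _) hp.2)
    (fun p _ => detourPath_one _ _ _) (fun p _ => detourPath_neg_one _ _ _) ?_
  intro p hp hdiag
  have hobtuse := hp.2
  rw [hdiag, real_inner_self_eq_norm_sq, norm_eq_of_mem_sphere] at hobtuse
  norm_num at hobtuse

lemma iUnion_obtuseSetOf_union_nonAntipodalSet {ι : Type*} [NormedAddCommGroup V]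
    [InnerProductSpace ℝ V] {s : ι → B × sphere (0 : V) 1 → V} (hs : ∀ p, ∃ i, s i p ≠ 0) :
    (⋃ i, obtuseSetOf (s i)) ∪ nonAntipodalSet = univ := by
  refine eq_univ_of_forall fun p => ?_
  by_cases hanti : (p.2.2 : V) = -(p.2.1 : V)
  · obtain ⟨i, hi⟩ := hs (p.1, p.2.1)
    refine Or.inl (mem_iUnion.2 ⟨i, hi, ?_⟩)
    rw [hanti, inner_neg_right, real_inner_self_eq_norm_sq, norm_eq_of_mem_sphere]
    norm_num
  · exact Or.inr hanti

end FibrewisePlanners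

theorem stmt4_general {V : Type*} [NormedAddCommGroup V] [InnerProductSpace ℝ V]
    {B : Type*} [TopologicalSpace B] {k : ℕ}
    (s : Fin k → B × Metric.sphere (0 : V) 1 → V)
    (hscont : ∀ i, Continuous (s i))
    (hsorth : ∀ i p, ⟪s i p, (p.2 : V)⟫ = 0)
    (hsnz : ∀ p, ∃ i, s i p ≠ 0) :
    ∃ (U : Fin (k + 1) → Set (B × Metric.sphere (0 : V) 1 × Metric.sphere (0 : V) 1))
      (φ : Fin (k + 1) → ℝ × (B × Metric.sphere (0 : V) 1 × Metric.sphere (0 : V) 1) →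
        Metric.sphere (0 : V) 1),
      (∀ i, IsOpen (U i)) ∧
      (⋃ i, U i) = Set.univ ∧
      (∀ i, ContinuousOn (φ i) (Set.Icc (-1 : ℝ) 1 ×ˢ U i)) ∧
      (∀ i, ∀ p ∈ U i, φ i (1, p) = p.2.1) ∧
      (∀ i, ∀ p ∈ U i, φ i (-1, p) = p.2.2) ∧
      (∀ i, ∀ p ∈ U i, p.2.1 = p.2.2 → ∀ t ∈ Set.Icc (-1 : ℝ) 1, φ i (t, p) = p.2.1) := by
  let U : Fin (k + 1) → Set (B × sphere (0 : V) 1 × sphere (0 : V) 1) :=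
    Fin.cases nonAntipodalSet fun i => obtuseSetOf (s i)
  let φ : Fin (k + 1) → ℝ × (B × sphere (0 : V) 1 × sphere (0 : V) 1) → sphere (0 : V) 1 :=
    Fin.cases chordPlanner fun i => detourPlanner (s i)
  have hU_open : ∀ i, IsOpen (U i) :=
    Fin.cases isOpen_nonAntipodalSet fun i => isOpen_obtuseSetOf (hscont i)
  have hU_cover : (⋃ i, U i) = univ := by
    rw [← iUnion_obtuseSetOf_union_nonAntipodalSet hsnz]
    ext p
    simp only [U, mem_iUnion, mem_union, Fin.exists_fin_succ, Fin.cases_zero, Fin.cases_succ]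
    tauto
  have hφ : ∀ i, IsFibrewisePlanner (U i) (φ i) :=
    Fin.cases isFibrewisePlanner_chordPlanner fun i =>
      isFibrewisePlanner_detourPlanner (hscont i) (hsorth i)
  exact ⟨U, φ, hU_open, hU_cover, fun i => (hφ i).1, fun i => (hφ i).2.1,
    fun i => (hφ i).2.2.1, fun i => (hφ i).2.2.2⟩

/-- Theorem 2.2, direct implication (1) ⟹ (3) (Remark 2.3), for a trivialized
bundle: a nowhere-zero section of `kζ̃` yields `k+1` fibrewise motion planners
fixing the diagonal. -/
theorem stmt4 {V : Type*} [NormedAddCommGroup V] [InnerProductSpace ℝ V]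
    [FiniteDimensional ℝ V] {n : ℕ} (hn : 1 ≤ n) (hdim : Module.finrank ℝ V = n + 1)
    {B : Type*} [TopologicalSpace B] {k : ℕ} (hk : 1 ≤ k)
    (s : Fin k → B × Metric.sphere (0 : V) 1 → V)
    (hscont : ∀ i, Continuous (s i))
    (hsorth : ∀ i p, ⟪s i p, (p.2 : V)⟫ = 0)
    (hsnz : ∀ p, ∃ i, s i p ≠ 0) :
    ∃ (U : Fin (k + 1) → Set (B × Metric.sphere (0 : V) 1 × Metric.sphere (0 : V) 1))
      (φ : Fin (k + 1) → ℝ × (B × Metric.sphere (0 : V) 1 × Metric.sphere (0 : V) 1) →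
        Metric.sphere (0 : V) 1),
      (∀ i, IsOpen (U i)) ∧
      (⋃ i, U i) = Set.univ ∧
      (∀ i, ContinuousOn (φ i) (Set.Icc (-1 : ℝ) 1 ×ˢ U i)) ∧
      (∀ i, ∀ p ∈ U i, φ i (1, p) = p.2.1) ∧
      (∀ i, ∀ p ∈ U i, φ i (-1, p) = p.2.2) ∧
      (∀ i, ∀ p ∈ U i, p.2.1 = p.2.2 → ∀ t ∈ Set.Icc (-1 : ℝ) 1, φ i (t, p) = p.2.1) :=
  stmt4_general s hscont hsorth hsnz
end

section
/- Let V be a finite-dimensional real inner product space with dim V = n+1 ≥ 2, B a topological space and k ≥ 1. Suppose s_1, …, s_k : B × S(V) → V are continuous maps such that ⟨s_i(b,u), u⟩ = 0, s_i(b,−u) = s_i(b,u) for all (b,u) and all i, and for every (b,u) at least one s_i(b,u) ≠ 0. Then there exist open sets V_1, …, V_k covering B × S(V), each invariant under the involution (b,u) ↦ (b,−u), and continuous maps ψ_i : [−1,1] × V_i → S(V) such that ψ_i(1,(b,u)) = u and ψ_i(−t,(b,−u)) = ψ_i(t,(b,u)) for all (b,u) ∈ V_i and t ∈ [−1,1].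 -/
/-!
Over `V_i = {s_i ≠ 0}`, `w = s_i / ‖s_i‖` is a unit vector orthogonal to `u`, so
`ψ_i(t) = sin(πt/2) u + cos(πt/2) w` runs along a great semicircle from `-u` through `w` to `u`.
The involution fixes `w` and negates `u`; as `sin` is odd and `cos` even,
`ψ_i(-t, (b, -u)) = ψ_i(t, (b, u))`.
-/

open scoped RealInnerProductSpace
open Real

section GreatCircle

variable {V : Type*} [NormedAddCommGroup V] [InnerProductSpace ℝ V]

noncomputable def greatCircle (u w : V) (t : ℝ) : V := sin (π / 2 * t) • u + cos (π / 2 * t) • w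

theorem greatCircle_one (u w : V) : greatCircle u w 1 = u := by
  simp [greatCircle]

theorem greatCircle_neg_neg (u w : V) (t : ℝ) : greatCircle (-u) w (-t) = greatCircle u w t := by
  simp [greatCircle]

theorem norm_greatCircle {u w : V} (hu : ‖u‖ = 1) (hw : ‖w‖ = 1) (huw : ⟪u, w⟫ = 0) (t : ℝ) :
    ‖greatCircle u w t‖ = 1 := by
  have hsq : ‖greatCircle u w t‖ ^ 2 = 1 := by
    rw [greatCircle, norm_add_sq_real, real_inner_smul_left, real_inner_smul_right, huw,
      norm_smul, norm_smul, hu, hw]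
    simp [sin_sq_add_cos_sq]
  exact (pow_eq_one_iff_of_nonneg (norm_nonneg _) two_ne_zero).1 hsq

end GreatCircle

section SectionArc

variable {V X : Type*} [NormedAddCommGroup V] [InnerProductSpace ℝ V]

/-- Where the great circle through `s x / ‖s x‖` and `u x` does not lie on the unit sphere
(e.g. where `s x = 0`), the path is taken constant at `u x`. -/
noncomputable def sectionArc (u : X → Metric.sphere (0 : V) 1) (s : X → V) (q : ℝ × X) :
    Metric.sphere (0 : V) 1 :=
  if h : ‖greatCircle (u q.2 : V) (‖s q.2‖⁻¹ • s q.2) q.1‖ = 1 then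
    ⟨_, mem_sphere_zero_iff_norm.2 h⟩
  else u q.2

variable {u : X → Metric.sphere (0 : V) 1} {s : X → V}

theorem sectionArc_one (x : X) : sectionArc u s (1, x) = u x := by
  unfold sectionArc
  split_ifs
  · exact Subtype.ext (greatCircle_one _ _)
  · rfl

theorem coe_sectionArc {x : X} (hs : s x ≠ 0) (horth : ⟪s x, u x⟫ = 0) (t : ℝ) :
    (sectionArc u s (t, x) : V) = greatCircle (u x : V) (‖s x‖⁻¹ • s x) t := by
  have hu : ‖(u x : V)‖ = 1 := by simp
  have hw : ‖‖s x‖⁻¹ • s x‖ = 1 := norm_smul_inv_norm hs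
  have horth' : ⟪(u x : V), ‖s x‖⁻¹ • s x⟫ = 0 := by
    rw [real_inner_smul_right, real_inner_comm, horth, mul_zero]
  rw [sectionArc, dif_pos (norm_greatCircle hu hw horth' t)]

theorem sectionArc_neg {x y : X} (hu : u y = -u x) (hs : s y = s x) (hs₀ : s x ≠ 0)
    (horth : ⟪s x, u x⟫ = 0) (t : ℝ) : sectionArc u s (-t, y) = sectionArc u s (t, x) := by
  have horth_y : ⟪s y, u y⟫ = 0 := by
    rw [hu, hs, coe_neg_sphere, inner_neg_right, horth, neg_zero]
  apply Subtype.ext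
  rw [coe_sectionArc (hs ▸ hs₀) horth_y, coe_sectionArc hs₀ horth, hu, hs, coe_neg_sphere,
    greatCircle_neg_neg]

theorem continuousOn_sectionArc [TopologicalSpace X] (hu : Continuous u) (hs : Continuous s)
    (horth : ∀ x, ⟪s x, u x⟫ = 0) : ContinuousOn (sectionArc u s) {q | s q.2 ≠ 0} := by
  rw [Topology.IsInducing.subtypeVal.continuousOn_iff]
  refine ContinuousOn.congr ?_ fun q hq => coe_sectionArc hq (horth q.2) q.1
  have hs₀ : ∀ q ∈ {q : ℝ × X | s q.2 ≠ 0}, ‖s q.2‖ ≠ 0 := fun q hq => norm_ne_zero_iff.2 hq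
  unfold greatCircle
  fun_prop (disch := exact hs₀)

end SectionArc

theorem stmt7_general {V : Type*} [NormedAddCommGroup V] [InnerProductSpace ℝ V]
    {B : Type*} [TopologicalSpace B] {k : ℕ}
    (s : Fin k → B × Metric.sphere (0 : V) 1 → V)
    (hscont : ∀ i, Continuous (s i))
    (hsorth : ∀ i p, ⟪s i p, (p.2 : V)⟫ = 0)
    (hssymm : ∀ i (b : B) (u : Metric.sphere (0 : V) 1), s i (b, -u) = s i (b, u))
    (hsnz : ∀ p, ∃ i, s i p ≠ 0) :
    ∃ (U : Fin k → Set (B × Metric.sphere (0 : V) 1))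
      (ψ : Fin k → ℝ × (B × Metric.sphere (0 : V) 1) → Metric.sphere (0 : V) 1),
      (∀ i, IsOpen (U i)) ∧
      (⋃ i, U i) = Set.univ ∧
      (∀ i, ∀ p ∈ U i, (p.1, -p.2) ∈ U i) ∧
      (∀ i, ContinuousOn (ψ i) (Set.Icc (-1 : ℝ) 1 ×ˢ U i)) ∧
      (∀ i, ∀ p ∈ U i, ψ i (1, p) = p.2) ∧
      (∀ i, ∀ p ∈ U i, ∀ t ∈ Set.Icc (-1 : ℝ) 1, ψ i (-t, (p.1, -p.2)) = ψ i (t, p)) := by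
  refine ⟨fun i => {p | s i p ≠ 0}, fun i => sectionArc Prod.snd (s i),
    fun i => isOpen_ne_fun (hscont i) continuous_const,
    Set.eq_univ_of_forall fun p => Set.mem_iUnion.2 (hsnz p),
    fun i p hp => (hssymm i p.1 p.2).trans_ne hp,
    fun i => (continuousOn_sectionArc continuous_snd (hscont i) (hsorth i)).mono
      fun q hq => hq.2,
    fun i p _ => sectionArc_one p,
    fun i p hp t _ => sectionArc_neg (u := Prod.snd) (y := (p.1, -p.2)) rfl (hssymm i p.1 p.2) (show s i p ≠ 0 from hp) (hsorth i p) t⟩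

/-- Theorem 2.9 (symmetrized version), implication (1) ⟹ (2), for a trivialized
bundle: a nowhere-zero symmetric section of `kζ` yields a ℤ/2-invariant open
cover of `B × S(V)` with equivariant fibrewise paths. -/
theorem stmt7 {V : Type*} [NormedAddCommGroup V] [InnerProductSpace ℝ V]
    [FiniteDimensional ℝ V] {n : ℕ} (hn : 1 ≤ n) (hdim : Module.finrank ℝ V = n + 1)
    {B : Type*} [TopologicalSpace B] {k : ℕ} (hk : 1 ≤ k)
    (s : Fin k → B × Metric.sphere (0 : V) 1 → V)
    (hscont : ∀ i, Continuous (s i))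
    (hsorth : ∀ i p, ⟪s i p, (p.2 : V)⟫ = 0)
    (hssymm : ∀ i (b : B) (u : Metric.sphere (0 : V) 1), s i (b, -u) = s i (b, u))
    (hsnz : ∀ p, ∃ i, s i p ≠ 0) :
    ∃ (U : Fin k → Set (B × Metric.sphere (0 : V) 1))
      (ψ : Fin k → ℝ × (B × Metric.sphere (0 : V) 1) → Metric.sphere (0 : V) 1),
      (∀ i, IsOpen (U i)) ∧
      (⋃ i, U i) = Set.univ ∧
      (∀ i, ∀ p ∈ U i, (p.1, -p.2) ∈ U i) ∧
      (∀ i, ContinuousOn (ψ i) (Set.Icc (-1 : ℝ) 1 ×ˢ U i)) ∧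
      (∀ i, ∀ p ∈ U i, ψ i (1, p) = p.2) ∧
      (∀ i, ∀ p ∈ U i, ∀ t ∈ Set.Icc (-1 : ℝ) 1, ψ i (-t, (p.1, -p.2)) = ψ i (t, p)) :=
  stmt7_general s hscont hsorth hssymm hsnz
end

section
/- Let V and V″ be finite-dimensional real inner product spaces of dimension at least 2, B a compact metric space and k ≥ 0. Suppose f : B × S(V) → S(V″) and g : B × S(V″) → S(V) are continuous, and h : [0,1] × B × S(V) → S(V) is a continuous homotopy with h(0,b,u) = u and h(1,b,u) = g(b, f(b,u)) for all (b,u). Suppose further there exist open sets U″_0, …, U″_k covering B × S(V″) × S(V″) and continuous maps φ″_i : [−1,1] × U″_i → S(V″) with φ″_i(1,(b,u,v)) = u, φ″_i(−1,(b,u,v)) = v for all (b,u,v) ∈ U″_i, and φ″_i(t,(b,u,u)) = u for all t whenever (b,u,u) ∈ U″_i. Then there exist open sets U_0, …, U_k covering B × S(V) × S(V) and continuous maps φ_i : [−1,1] × U_i → S(V) with φ_i(1,(b,u,v)) = u, φ_i(−1,(b,u,v)) = v for all (b,u,v) ∈ U_i, and φ_i(t,(b,u,u)) = u for all t whenever (b,u,u)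 ∈ U_i. -/
/-
Pull the planners of `B × S(V″)` back along `(b, u, v) ↦ (b, f(b, u), f(b, v))`: from `u`, follow
the homotopy `h` to `g(b, f(b, u))`, then `g ∘ φ″ᵢ`, then `h` backwards to `v`. This path is not
constant on the diagonal, so it is deformed near it. With `d = dist u v`, the path runs `h` only
up to time `q = min 1 (2d/ε)`, follows `h_q` of the great-circle arc from `u` towards `v` up to
the fraction `κ` (`1` for `d ≤ ε/2`, `0` for `d ≥ ε`), crosses by a short arc to the point of
`g ∘ φ″ᵢ` at the same fraction, and returns along `g ∘ φ″ᵢ` and `h`. For `d ≤ ε/2` the planner is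
not used: the path waits at `h_q(v)` instead. On the diagonal `q = 0` and the path is constant.
Uniform continuity on the compact spaces involved, together with the constancy of `φ″ᵢ` on the
diagonal, keeps the two ends of the crossing arc at distance `< 2` for small `ε`, so they are not
antipodal and the arc is defined.
-/

open Set Metric AffineMap unitInterval

section SphereSegment

variable {V : Type*} [NormedAddCommGroup V] [NormedSpace ℝ V]

theorem lineMap_ne_zero_of_dist_lt_two {u v : V} (hu : ‖u‖ = 1) (hv : ‖v‖ = 1)
    (huv : dist u v < 2) {t : ℝ} (ht : t ∈ Icc (0 : ℝ) 1) : lineMap u v t ≠ 0 := by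
  intro h0
  rw [lineMap_apply_module, add_eq_zero_iff_eq_neg] at h0
  have hnorm : 1 - t = t := by
    simpa [norm_smul, hu, hv, abs_of_nonneg ht.1, abs_of_nonneg (sub_nonneg.2 ht.2)] using
      congrArg norm h0
  obtain rfl : t = 1 / 2 := by linarith
  have huv' : u = -v := by
    rw [show (1 : ℝ) - 1 / 2 = 1 / 2 by norm_num, ← smul_neg] at h0
    exact smul_right_injective V (by norm_num : (1 / 2 : ℝ) ≠ 0) h0
  rw [huv', dist_eq_norm, ← neg_add', norm_neg, ← two_smul ℝ v, norm_smul, hv] at huv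
  norm_num at huv

theorem norm_normalize_sub_le {u w : V} (hu : ‖u‖ = 1) (hw : w ≠ 0) :
    ‖NormedSpace.normalize w - u‖ ≤ 2 * ‖w - u‖ := by
  have hw' : 0 < ‖w‖ := norm_pos_iff.2 hw
  have hnw : ‖NormedSpace.normalize w - w‖ = |1 - ‖w‖| := by
    rw [NormedSpace.normalize, show ‖w‖⁻¹ • w - w = (‖w‖⁻¹ - 1) • w by rw [sub_smul, one_smul],
      norm_smul, Real.norm_eq_abs, ← abs_norm w, ← abs_mul, abs_norm, sub_mul,
      inv_mul_cancel₀ hw'.ne', one_mul, abs_sub_comm]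
  calc ‖NormedSpace.normalize w - u‖ ≤ ‖NormedSpace.normalize w - w‖ + ‖w - u‖ :=
        norm_sub_le_norm_sub_add_norm_sub _ _ _
    _ = |‖u‖ - ‖w‖| + ‖w - u‖ := by rw [hnw, hu]
    _ ≤ ‖u - w‖ + ‖w - u‖ := by gcongr; exact abs_norm_sub_norm_le u w
    _ = 2 * ‖w - u‖ := by rw [norm_sub_rev]; ring

open scoped Classical in
/-- The radial projection of the chord from `u` to `v`, a great-circle arc unless `u = -v`; the
junk value `u` is taken where the chord passes through the origin. -/
noncomputable def sphereSegment (u v : sphere (0 : V) 1) (t : ℝ) : sphere (0 : V) 1 :=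
  if h : lineMap (u : V) v t = 0 then u
  else ⟨NormedSpace.normalize (lineMap (u : V) v t),
    by simpa using NormedSpace.norm_normalize_eq_one_iff.2 h⟩

theorem coe_sphereSegment {u v : sphere (0 : V) 1} {t : ℝ} (h : lineMap (u : V) v t ≠ 0) :
    (sphereSegment u v t : V) = NormedSpace.normalize (lineMap (u : V) v t) := by
  rw [sphereSegment, dif_neg h]

theorem sphereSegment_of_lineMap_eq {u v w : sphere (0 : V) 1} {t : ℝ}
    (h : lineMap (u : V) v t = w) : sphereSegment u v t = w := by
  have hw : lineMap (u : V) v t ≠ 0 := h ▸ ne_zero_of_mem_unit_sphere w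
  exact Subtype.ext <| by
    rw [coe_sphereSegment hw, h, NormedSpace.normalize_eq_self_of_norm_eq_one (by simp)]

@[simp]
theorem sphereSegment_zero (u v : sphere (0 : V) 1) : sphereSegment u v 0 = u :=
  sphereSegment_of_lineMap_eq (lineMap_apply_zero _ _)

@[simp]
theorem sphereSegment_one (u v : sphere (0 : V) 1) : sphereSegment u v 1 = v :=
  sphereSegment_of_lineMap_eq (lineMap_apply_one _ _)

@[simp]
theorem sphereSegment_self (u : sphere (0 : V) 1) (t : ℝ) : sphereSegment u u t = u :=
  sphereSegment_of_lineMap_eq (lineMap_same_apply _ _)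

theorem dist_sphereSegment_left_le {u v : sphere (0 : V) 1} (huv : dist u v < 2) {t : ℝ}
    (ht : t ∈ Icc (0 : ℝ) 1) : dist (sphereSegment u v t) u ≤ 2 * dist u v := by
  have hne := lineMap_ne_zero_of_dist_lt_two (by simp) (by simp) huv ht
  rw [Subtype.dist_eq, dist_eq_norm, coe_sphereSegment hne]
  refine (norm_normalize_sub_le (by simp) hne).trans ?_
  rw [← dist_eq_norm, dist_lineMap_left, Real.norm_eq_abs, abs_of_nonneg ht.1, Subtype.dist_eq]
  nlinarith [ht.2, dist_nonneg (x := (u : V)) (y := v)]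

theorem Continuous.sphereSegment {X : Type*} [TopologicalSpace X] {u v : X → sphere (0 : V) 1}
    {t : X → ℝ} (hu : Continuous u) (hv : Continuous v) (ht : Continuous t)
    (hne : ∀ x, AffineMap.lineMap (u x : V) (v x) (t x) ≠ 0) :
    Continuous fun x ↦ sphereSegment (u x) (v x) (t x) := by
  rw [Topology.IsInducing.subtypeVal.continuous_iff]
  have hl : Continuous fun x ↦ AffineMap.lineMap (u x : V) (v x) (t x) := by fun_prop
  simp only [Function.comp_def, coe_sphereSegment (hne _), NormedSpace.normalize]
  exact (hl.norm.inv₀ fun x ↦ norm_ne_zero_iff.2 (hne x)).smul hl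

end SphereSegment

section MotionPlanner

variable {B X : Type*} [TopologicalSpace B] [TopologicalSpace X]

structure IsFiberwiseMotionPlanner (U : Set (B × X × X)) (φ : ℝ × (B × X × X) → X) : Prop where
  continuousOn : ContinuousOn φ (Icc (-1) 1 ×ˢ U)
  apply_one : ∀ p ∈ U, φ (1, p) = p.2.1
  apply_neg_one : ∀ p ∈ U, φ (-1, p) = p.2.2
  apply_of_eq : ∀ p ∈ U, p.2.1 = p.2.2 → ∀ t ∈ Icc (-1 : ℝ) 1, φ (t, p) = p.2.1

theorem IsFiberwiseMotionPlanner.mono {U W : Set (B × X × X)} {φ : ℝ × (B × X × X) → X}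
    (hφ : IsFiberwiseMotionPlanner U φ) (hWU : W ⊆ U) : IsFiberwiseMotionPlanner W φ where
  continuousOn := hφ.continuousOn.mono (prod_mono_right hWU)
  apply_one p hp := hφ.apply_one p (hWU hp)
  apply_neg_one p hp := hφ.apply_neg_one p (hWU hp)
  apply_of_eq p hp := hφ.apply_of_eq p (hWU hp)

def familyPath {ι : Type*} [TopologicalSpace ι] {a b : ι → X} (Γ : ι → ℝ → X)
    (hΓ : Continuous fun x : ι × I ↦ Γ x.1 x.2) (h₀ : ∀ i, Γ i 0 = a i) (h₁ : ∀ i, Γ i 1 = b i)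
    (i : ι) : Path (a i) (b i) where
  toFun s := Γ i s
  continuous_toFun := hΓ.comp (Continuous.prodMk_right i)
  source' := h₀ i
  target' := h₁ i

theorem continuous_uncurry_familyPath {ι : Type*} [TopologicalSpace ι] {a b : ι → X}
    {Γ : ι → ℝ → X} (hΓ : Continuous fun x : ι × I ↦ Γ x.1 x.2) (h₀ : ∀ i, Γ i 0 = a i)
    (h₁ : ∀ i, Γ i 1 = b i) : Continuous ↿(familyPath Γ hΓ h₀ h₁) :=
  hΓ

theorem exists_isFiberwiseMotionPlanner_of_paths {U : Set (B × X × X)}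
    (γ : ∀ p : U, Path (p : B × X × X).2.1 (p : B × X × X).2.2) (hγ : Continuous ↿γ)
    (hdiag : ∀ p : U, (p : B × X × X).2.1 = (p : B × X × X).2.2 →
      range (γ p) ⊆ {(p : B × X × X).2.1}) :
    ∃ φ, IsFiberwiseMotionPlanner U φ := by
  classical
  let φ : ℝ × (B × X × X) → X := fun x ↦
    if hx : x.2 ∈ U then (γ ⟨x.2, hx⟩).extend ((1 - x.1) / 2) else x.2.2.1
  refine ⟨φ, ⟨?_, fun p hp ↦ ?_, fun p hp ↦ ?_, fun p hp huv t _ ↦ ?_⟩⟩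
  · rw [continuousOn_iff_continuous_domRestrict]
    have : domRestrict (Icc (-1) 1 ×ˢ U) φ =
        fun x ↦ (γ ⟨x.1.2, x.2.2⟩).extend ((1 - x.1.1) / 2) := by
      ext x
      exact dif_pos x.2.2
    rw [this]
    exact (Path.continuous_uncurry_extend_of_continuous_family γ hγ).comp
      ((continuous_snd.comp continuous_subtype_val).subtype_mk _ |>.prodMk (by fun_prop))
  · simp [φ, hp]
  · simp [φ, hp]
  · simp only [φ, dif_pos hp]
    exact hdiag ⟨p, hp⟩ huv (by rw [← Path.extend_range]; exact mem_range_self _)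

end MotionPlanner

theorem IsFiberwiseMotionPlanner.exists_dist_lt {B X : Type*} [MetricSpace B]
    [MetricSpace X] {U C : Set (B × X × X)} {φ : ℝ × (B × X × X) → X}
    (hφ : IsFiberwiseMotionPlanner U φ) (hC : IsCompact C) (hCU : C ⊆ U) {η : ℝ} (hη : 0 < η) :
    ∃ δ > 0, ∀ t ∈ Icc (-1 : ℝ) 1, ∀ p ∈ C, dist p.2.1 p.2.2 < δ → dist (φ (t, p)) p.2.1 < η := by
  let K := Icc (-1 : ℝ) 1 ×ˢ C
  let E := K ∩ (fun x ↦ dist (φ x) x.2.2.1) ⁻¹' Ici η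
  have hE : IsCompact E := by
    have hφK : ContinuousOn (fun x ↦ dist (φ x) x.2.2.1) K :=
      continuous_dist.comp_continuousOn
        ((hφ.continuousOn.mono (prod_mono_right hCU)).prodMk (by fun_prop))
    exact (isCompact_Icc.prod hC).of_isClosed_subset
      (hφK.preimage_isClosed_of_isClosed (isClosed_Icc.prod hC.isClosed) isClosed_Ici)
      inter_subset_left
  have hpos : ∀ x ∈ E, 0 < dist x.2.2.1 x.2.2.2 := by
    rintro ⟨t, p⟩ ⟨⟨ht, hp⟩, hηp⟩
    refine dist_pos.2 fun huv ↦ ?_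
    have := hφ.apply_of_eq p (hCU hp) huv t ht
    simp only [mem_preimage, this, dist_self, mem_Ici] at hηp
    linarith
  obtain ⟨δ, hδ, hδE⟩ := hE.exists_forall_le' (by fun_prop) hpos
  refine ⟨δ, hδ, fun t ht p hp hd ↦ not_le.1 fun hηp ↦ ?_⟩
  exact (hδE (t, p) ⟨⟨ht, hp⟩, hηp⟩).not_gt hd

theorem UniformContinuous.exists_forall_dist_lt_of_dist_snd_lt {α β γ : Type*}
    [PseudoMetricSpace α] [PseudoMetricSpace β] [PseudoMetricSpace γ] {F : α × β → γ}
    (hF : UniformContinuous F) {ε : ℝ} (hε : 0 < ε) :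
    ∃ δ > 0, ∀ a b b', dist b b' < δ → dist (F (a, b)) (F (a, b')) < ε := by
  obtain ⟨δ, hδ, hF⟩ := Metric.uniformContinuous_iff.1 hF ε hε
  exact ⟨δ, hδ, fun a b b' hb ↦ hF (by simpa [Prod.dist_eq] using hb)⟩

def fiberProdMap {B X Y : Type*} (f : B × X → Y) (p : B × X × X) : B × Y × Y :=
  (p.1, f (p.1, p.2.1), f (p.1, p.2.2))

@[fun_prop]
theorem continuous_fiberProdMap {B X Y : Type*} [TopologicalSpace B] [TopologicalSpace X]
    [TopologicalSpace Y] {f : B × X → Y} (hf : Continuous f) : Continuous (fiberProdMap f) := by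
  unfold fiberProdMap; fun_prop

section Parameters

variable {B X : Type*} [PseudoMetricSpace X]

noncomputable def homotopyDepth (ε : ℝ) (x : B × X × X) : ℝ :=
  min 1 (2 * dist x.2.1 x.2.2 / ε)

noncomputable def chordFraction (ε : ℝ) (x : B × X × X) : ℝ :=
  max 0 (min 1 (2 - 2 * dist x.2.1 x.2.2 / ε))

theorem homotopyDepth_mem {ε : ℝ} (hε : 0 < ε) (x : B × X × X) :
    homotopyDepth ε x ∈ Icc (0 : ℝ) 1 :=
  ⟨le_min zero_le_one (by positivity), min_le_left _ _⟩

theorem chordFraction_mem (ε : ℝ) (x : B × X × X) : chordFraction ε x ∈ Icc (0 : ℝ) 1 :=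
  ⟨le_max_left _ _, max_le zero_le_one (min_le_left _ _)⟩

theorem homotopyDepth_of_eq (ε : ℝ) {x : B × X × X} (h : x.2.1 = x.2.2) :
    homotopyDepth ε x = 0 := by
  simp [homotopyDepth, h]

theorem homotopyDepth_of_le {ε : ℝ} (hε : 0 < ε) {x : B × X × X}
    (h : ε / 2 ≤ dist x.2.1 x.2.2) : homotopyDepth ε x = 1 :=
  min_eq_left <| by rw [le_div_iff₀ hε]; linarith

theorem chordFraction_of_le {ε : ℝ} (hε : 0 < ε) {x : B × X × X}
    (h : dist x.2.1 x.2.2 ≤ ε / 2) : chordFraction ε x = 1 := by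
  have : 2 * dist x.2.1 x.2.2 / ε ≤ 1 := by rw [div_le_iff₀ hε]; linarith
  rw [chordFraction, min_eq_left (by linarith), max_eq_right zero_le_one]

theorem chordFraction_of_ge {ε : ℝ} (hε : 0 < ε) {x : B × X × X}
    (h : ε ≤ dist x.2.1 x.2.2) : chordFraction ε x = 0 := by
  have : 2 ≤ 2 * dist x.2.1 x.2.2 / ε := by rw [le_div_iff₀ hε]; linarith
  rw [chordFraction, max_eq_left (min_le_of_right_le (by linarith))]

@[fun_prop]
theorem continuous_homotopyDepth [TopologicalSpace B] (ε : ℝ) :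
    Continuous (homotopyDepth (B := B) (X := X) ε) := by
  unfold homotopyDepth; fun_prop

@[fun_prop]
theorem continuous_chordFraction [TopologicalSpace B] (ε : ℝ) :
    Continuous (chordFraction (B := B) (X := X) ε) := by
  unfold chordFraction; fun_prop

end Parameters

section Construction

variable {V B Y : Type*} [NormedAddCommGroup V]
  (h : ℝ × (B × sphere (0 : V) 1) → sphere (0 : V) 1) (g : B × Y → sphere (0 : V) 1)
  (f : B × sphere (0 : V) 1 → Y) (φ : ℝ × (B × Y × Y) → Y) (ε : ℝ)

noncomputable def homotopyArc (x : B × sphere (0 : V) 1 × sphere (0 : V) 1)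
    (w : sphere (0 : V) 1) (s : ℝ) : sphere (0 : V) 1 :=
  h (homotopyDepth ε x * s, (x.1, w))

-- The two branches agree where `dist x.2.1 x.2.2 = ε / 2`: there `homotopyDepth` and
-- `chordFraction` are `1`, so `φ` is evaluated at its endpoint `-1`.
noncomputable def plannerArc (x : B × sphere (0 : V) 1 × sphere (0 : V) 1) (s : ℝ) :
    sphere (0 : V) 1 :=
  if dist x.2.1 x.2.2 ≤ ε / 2 then h (homotopyDepth ε x, (x.1, x.2.2))
  else g (x.1, φ (1 - 2 * (chordFraction ε x + (1 - chordFraction ε x) * s), fiberProdMap f x))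

variable {h g f φ ε}

theorem homotopyArc_zero (hh0 : ∀ p, h (0, p) = p.2) (x : B × sphere (0 : V) 1 × sphere (0 : V) 1)
    (w : sphere (0 : V) 1) : homotopyArc h ε x w 0 = w := by
  simp [homotopyArc, hh0]

theorem homotopyArc_one (x : B × sphere (0 : V) 1 × sphere (0 : V) 1) (w : sphere (0 : V) 1) :
    homotopyArc h ε x w 1 = h (homotopyDepth ε x, (x.1, w)) := by
  simp [homotopyArc]

theorem homotopyArc_of_eq (hh0 : ∀ p, h (0, p) = p.2) {x : B × sphere (0 : V) 1 × sphere (0 : V) 1}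
    (hx : x.2.1 = x.2.2) (w : sphere (0 : V) 1) (s : ℝ) : homotopyArc h ε x w s = w := by
  simp [homotopyArc, homotopyDepth_of_eq ε hx, hh0]

theorem plannerArc_one [TopologicalSpace B] [TopologicalSpace Y] {U : Set (B × Y × Y)}
    (hφ : IsFiberwiseMotionPlanner U φ) (hh1 : ∀ p, h (1, p) = g (p.1, f p)) (hε : 0 < ε)
    {x : B × sphere (0 : V) 1 × sphere (0 : V) 1} (hx : fiberProdMap f x ∈ U) :
    plannerArc h g f φ ε x 1 = homotopyArc h ε x x.2.2 1 := by
  rw [plannerArc, homotopyArc_one]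
  split_ifs with hd
  · rfl
  · rw [homotopyDepth_of_le hε (not_le.1 hd).le, hh1, mul_one, add_sub_cancel, mul_one,
      show (1 : ℝ) - 2 = -1 by norm_num, hφ.apply_neg_one _ hx]
    rfl

theorem plannerArc_of_eq (hh0 : ∀ p, h (0, p) = p.2) (hε : 0 < ε)
    {x : B × sphere (0 : V) 1 × sphere (0 : V) 1} (hx : x.2.1 = x.2.2) (s : ℝ) :
    plannerArc h g f φ ε x s = x.2.1 := by
  rw [plannerArc, if_pos (by rw [hx, dist_self]; positivity), homotopyDepth_of_eq ε hx, hh0, hx]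

variable [NormedSpace ℝ V]

variable (h ε) in
noncomputable def chordArc (x : B × sphere (0 : V) 1 × sphere (0 : V) 1) (s : ℝ) :
    sphere (0 : V) 1 :=
  h (homotopyDepth ε x, (x.1, sphereSegment x.2.1 x.2.2 (chordFraction ε x * s)))

variable (h g f φ ε) in
noncomputable def bridgeArc (x : B × sphere (0 : V) 1 × sphere (0 : V) 1) (s : ℝ) :
    sphere (0 : V) 1 :=
  sphereSegment (chordArc h ε x 1) (plannerArc h g f φ ε x 0) s

theorem lineMap_chordFraction_ne_zero (hε : 0 < ε) (hε2 : ε ≤ 2)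
    (x : B × sphere (0 : V) 1 × sphere (0 : V) 1) {s : ℝ} (hs : s ∈ Icc (0 : ℝ) 1) :
    AffineMap.lineMap (x.2.1 : V) x.2.2 (chordFraction ε x * s) ≠ 0 := by
  rcases lt_or_ge (dist x.2.1 x.2.2) ε with hd | hd
  · obtain ⟨hκ0, hκ1⟩ := chordFraction_mem ε x
    exact lineMap_ne_zero_of_dist_lt_two (by simp) (by simp) (by rw [← Subtype.dist_eq]; linarith)
      ⟨mul_nonneg hκ0 hs.1, mul_le_one₀ hκ1 hs.1 hs.2⟩
  · rw [chordFraction_of_ge hε hd, zero_mul, AffineMap.lineMap_apply_zero]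
    exact ne_zero_of_mem_unit_sphere _

theorem chordArc_zero (x : B × sphere (0 : V) 1 × sphere (0 : V) 1) :
    chordArc h ε x 0 = homotopyArc h ε x x.2.1 1 := by
  simp [chordArc, homotopyArc_one]

theorem chordArc_of_eq (hh0 : ∀ p, h (0, p) = p.2) {x : B × sphere (0 : V) 1 × sphere (0 : V) 1}
    (hx : x.2.1 = x.2.2) (s : ℝ) : chordArc h ε x s = x.2.1 := by
  simp [chordArc, homotopyDepth_of_eq ε hx, hh0, hx]

theorem bridgeArc_of_eq (hh0 : ∀ p, h (0, p) = p.2) (hε : 0 < ε)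
    {x : B × sphere (0 : V) 1 × sphere (0 : V) 1} (hx : x.2.1 = x.2.2) (s : ℝ) :
    bridgeArc h g f φ ε x s = x.2.1 := by
  rw [bridgeArc, chordArc_of_eq hh0 hx, plannerArc_of_eq hh0 hε hx, sphereSegment_self]

end Construction

section Continuity

variable {V B Y : Type*} [NormedAddCommGroup V] [TopologicalSpace B] [TopologicalSpace Y]
  {h : ℝ × (B × sphere (0 : V) 1) → sphere (0 : V) 1} {g : B × Y → sphere (0 : V) 1}
  {f : B × sphere (0 : V) 1 → Y} {φ : ℝ × (B × Y × Y) → Y} {ε : ℝ}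
  {ι : Type*} [TopologicalSpace ι] {x : ι → B × sphere (0 : V) 1 × sphere (0 : V) 1}

theorem continuous_homotopyArc (hh : ContinuousOn h (Icc 0 1 ×ˢ univ)) (hε : 0 < ε)
    (hx : Continuous x) {w : ι → sphere (0 : V) 1} (hw : Continuous w) :
    Continuous fun y : ι × I ↦ homotopyArc h ε (x y.1) (w y.1) y.2 := by
  refine hh.comp_continuous (by fun_prop) fun y ↦ ⟨?_, mem_univ _⟩
  have := homotopyDepth_mem hε (x y.1)
  exact ⟨mul_nonneg this.1 y.2.2.1, mul_le_one₀ this.2 y.2.2.1 y.2.2.2⟩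

theorem continuous_plannerArc (hg : Continuous g) (hf : Continuous f)
    (hh : ContinuousOn h (Icc 0 1 ×ˢ univ)) (hh1 : ∀ p, h (1, p) = g (p.1, f p))
    {U : Set (B × Y × Y)} (hφ : IsFiberwiseMotionPlanner U φ) (hε : 0 < ε)
    (hx : Continuous x) (hxU : ∀ i, fiberProdMap f (x i) ∈ U) :
    Continuous fun y : ι × I ↦ plannerArc h g f φ ε (x y.1) y.2 := by
  refine continuous_if_le (by fun_prop) continuous_const ?_ ?_ ?_
  · exact (hh.comp_continuous (by fun_prop)
      fun y ↦ ⟨homotopyDepth_mem hε _, mem_univ _⟩).continuousOn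
  · refine (hg.comp ((continuous_fst.comp (hx.comp continuous_fst)).prodMk ?_)).continuousOn
    refine hφ.continuousOn.comp_continuous (by fun_prop) fun y ↦ ⟨?_, hxU y.1⟩
    obtain ⟨hκ0, hκ1⟩ := chordFraction_mem ε (x y.1)
    have h0 := mul_nonneg (sub_nonneg.2 hκ1) y.2.2.1
    have h1 := mul_le_mul_of_nonneg_left y.2.2.2 (sub_nonneg.2 hκ1)
    constructor <;> linarith
  · intro y hy
    have hU := hφ.apply_neg_one _ (hxU y.1)
    simp only [homotopyDepth_of_le hε hy.ge, chordFraction_of_le hε hy.le, hh1]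
    norm_num [hU]
    rfl

variable [NormedSpace ℝ V]

theorem continuous_chordArc (hh : ContinuousOn h (Icc 0 1 ×ˢ univ)) (hε : 0 < ε) (hε2 : ε ≤ 2)
    (hx : Continuous x) : Continuous fun y : ι × I ↦ chordArc h ε (x y.1) y.2 := by
  have hseg : Continuous fun y : ι × I ↦
      sphereSegment (x y.1).2.1 (x y.1).2.2 (chordFraction ε (x y.1) * y.2) :=
    .sphereSegment (by fun_prop) (by fun_prop) (by fun_prop)
      fun y ↦ lineMap_chordFraction_ne_zero hε hε2 _ y.2.2
  exact hh.comp_continuous (by fun_prop) fun y ↦ ⟨homotopyDepth_mem hε _, mem_univ _⟩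

theorem continuous_bridgeArc (hg : Continuous g) (hf : Continuous f)
    (hh : ContinuousOn h (Icc 0 1 ×ˢ univ)) (hh1 : ∀ p, h (1, p) = g (p.1, f p))
    {U : Set (B × Y × Y)} (hφ : IsFiberwiseMotionPlanner U φ) (hε : 0 < ε) (hε2 : ε ≤ 2)
    (hx : Continuous x) (hxU : ∀ i, fiberProdMap f (x i) ∈ U)
    (hclose : ∀ i, dist (chordArc h ε (x i) 1) (plannerArc h g f φ ε (x i) 0) < 2) :
    Continuous fun y : ι × I ↦ bridgeArc h g f φ ε (x y.1) y.2 := by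
  have hX : Continuous fun y : ι × I ↦ chordArc h ε (x y.1) (1 : I) :=
    (continuous_chordArc hh hε hε2 hx).comp (f := fun y : ι × I ↦ (y.1, 1)) (by fun_prop)
  have hY : Continuous fun y : ι × I ↦ plannerArc h g f φ ε (x y.1) (0 : I) :=
    (continuous_plannerArc hg hf hh hh1 hφ hε hx hxU).comp (f := fun y : ι × I ↦ (y.1, 0))
      (by fun_prop)
  exact .sphereSegment hX hY (continuous_subtype_val.comp continuous_snd)
    fun y ↦ lineMap_ne_zero_of_dist_lt_two (by simp) (by simp) (hclose y.1) y.2.2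

end Continuity

section Pullback

variable {V B Y : Type*} [NormedAddCommGroup V] [NormedSpace ℝ V] [MetricSpace B] [MetricSpace Y]
  {h : ℝ × (B × sphere (0 : V) 1) → sphere (0 : V) 1} {g : B × Y → sphere (0 : V) 1}
  {f : B × sphere (0 : V) 1 → Y} {φ : ℝ × (B × Y × Y) → Y} {ε : ℝ}

theorem dist_chordArc_plannerArc_lt_two (hh1 : ∀ p, h (1, p) = g (p.1, f p))
    {U : Set (B × Y × Y)} (hφ : IsFiberwiseMotionPlanner U φ) (hε : 0 < ε)
    {x : B × sphere (0 : V) 1 × sphere (0 : V) 1} (hxU : fiberProdMap f x ∈ U)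
    (hnear : dist x.2.1 x.2.2 < ε → ∀ t ∈ Icc (0 : ℝ) 1, ∀ r ∈ Icc (-1 : ℝ) 1,
      dist (g (x.1, f (x.1, sphereSegment x.2.1 x.2.2 t))) (g (x.1, φ (r, fiberProdMap f x))) < 2) :
    dist (chordArc h ε x 1) (plannerArc h g f φ ε x 0) < 2 := by
  rw [chordArc, plannerArc, mul_one]
  split_ifs with hd
  · simp [chordFraction_of_le hε hd]
  rw [homotopyDepth_of_le hε (not_le.1 hd).le, hh1, mul_zero, add_zero]
  rcases lt_or_ge (dist x.2.1 x.2.2) ε with hd' | hd'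
  · obtain ⟨hκ0, hκ1⟩ := chordFraction_mem ε x
    exact hnear hd' _ ⟨hκ0, hκ1⟩ _ ⟨by linarith, by linarith⟩
  · rw [chordFraction_of_ge hε hd', mul_zero, sub_zero, hφ.apply_one _ hxU]
    simp [fiberProdMap]

theorem exists_pos_forall_dist_lt_two [CompactSpace B] [ProperSpace V] [CompactSpace Y]
    (hg : Continuous g) (hf : Continuous f) {U C : Set (B × Y × Y)}
    (hφ : IsFiberwiseMotionPlanner U φ) (hC : IsCompact C) (hCU : C ⊆ U) :
    ∃ ε > 0, ε ≤ 2 ∧ ∀ x ∈ fiberProdMap f ⁻¹' C, dist x.2.1 x.2.2 < ε →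
      ∀ t ∈ Icc (0 : ℝ) 1, ∀ r ∈ Icc (-1 : ℝ) 1,
      dist (g (x.1, f (x.1, sphereSegment x.2.1 x.2.2 t))) (g (x.1, φ (r, fiberProdMap f x))) <
        2 := by
  obtain ⟨δg, hδg, hg'⟩ := (CompactSpace.uniformContinuous_of_continuous
    hg).exists_forall_dist_lt_of_dist_snd_lt one_pos
  obtain ⟨δA, hδA, hA⟩ := hφ.exists_dist_lt hC hCU hδg
  obtain ⟨δf, hδf, hf'⟩ := (CompactSpace.uniformContinuous_of_continuous
    hf).exists_forall_dist_lt_of_dist_snd_lt (lt_min hδg hδA)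
  refine ⟨min 1 (δf / 2), by positivity, (min_le_left _ _).trans one_le_two,
    fun x hx hd t ht r hr ↦ ?_⟩
  have hd1 : dist x.2.1 x.2.2 < 1 := hd.trans_le (min_le_left _ _)
  have hd2 : dist x.2.1 x.2.2 < δf / 2 := hd.trans_le (min_le_right _ _)
  have hseg : dist (sphereSegment x.2.1 x.2.2 t) x.2.1 < δf :=
    (dist_sphereSegment_left_le (by linarith) ht).trans_lt (by linarith)
  have h₁ := hg' x.1 _ _ ((hf' x.1 _ _ hseg).trans_le (min_le_left _ _))
  have h₂ := hg' x.1 _ _ (hA r hr _ hx ((hf' x.1 _ _ (by linarith)).trans_le (min_le_right _ _)))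
  calc _ ≤ _ + _ := dist_triangle_right _ _ (g (x.1, f (x.1, x.2.1)))
    _ < 1 + 1 := add_lt_add h₁ h₂
    _ = 2 := one_add_one_eq_two

theorem exists_isFiberwiseMotionPlanner_of_forall_dist_lt_two (hg : Continuous g)
    (hf : Continuous f) (hh : ContinuousOn h (Icc 0 1 ×ˢ univ)) (hh0 : ∀ p, h (0, p) = p.2)
    (hh1 : ∀ p, h (1, p) = g (p.1, f p)) {U : Set (B × Y × Y)} (hφ : IsFiberwiseMotionPlanner U φ)
    {P : Set (B × sphere (0 : V) 1 × sphere (0 : V) 1)} (hPU : ∀ x ∈ P, fiberProdMap f x ∈ U)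
    (hε : 0 < ε) (hε2 : ε ≤ 2)
    (hnear : ∀ x ∈ P, dist x.2.1 x.2.2 < ε → ∀ t ∈ Icc (0 : ℝ) 1, ∀ r ∈ Icc (-1 : ℝ) 1,
      dist (g (x.1, f (x.1, sphereSegment x.2.1 x.2.2 t))) (g (x.1, φ (r, fiberProdMap f x))) < 2) :
    ∃ ψ, IsFiberwiseMotionPlanner P ψ := by
  have hx : Continuous ((↑) : P → B × sphere (0 : V) 1 × sphere (0 : V) 1) := continuous_subtype_val
  have hxU (p : P) := hPU p p.2
  let γ₁ := familyPath (fun p : P ↦ homotopyArc h ε p p.1.2.1)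
    (continuous_homotopyArc hh hε hx hx.snd.fst) (fun p ↦ homotopyArc_zero hh0 _ _) fun _ ↦ rfl
  let γ₂ := familyPath (fun p : P ↦ chordArc h ε p) (continuous_chordArc hh hε hε2 hx)
    (fun p ↦ chordArc_zero _) fun _ ↦ rfl
  let γ₃ := familyPath (fun p : P ↦ bridgeArc h g f φ ε p)
    (continuous_bridgeArc hg hf hh hh1 hφ hε hε2 hx hxU
      fun p ↦ dist_chordArc_plannerArc_lt_two hh1 hφ hε (hxU p) (hnear p p.2))
    (fun _ ↦ sphereSegment_zero _ _) fun _ ↦ sphereSegment_one _ _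
  let γ₄ := familyPath (fun p : P ↦ plannerArc h g f φ ε p)
    (continuous_plannerArc hg hf hh hh1 hφ hε hx hxU) (fun _ ↦ rfl)
    fun p ↦ plannerArc_one hφ hh1 hε (hxU p)
  let γ₅ := familyPath (fun p : P ↦ homotopyArc h ε p p.1.2.2)
    (continuous_homotopyArc hh hε hx hx.snd.snd) (fun p ↦ homotopyArc_zero hh0 _ _) fun _ ↦ rfl
  refine exists_isFiberwiseMotionPlanner_of_paths
    (fun p ↦ (γ₁ p).trans <| (γ₂ p).trans <| (γ₃ p).trans <| (γ₄ p).trans (γ₅ p).symm) ?_ ?_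
  · exact Path.trans_continuous_family _ (continuous_uncurry_familyPath _ _ _) _ <|
      Path.trans_continuous_family _ (continuous_uncurry_familyPath _ _ _) _ <|
      Path.trans_continuous_family _ (continuous_uncurry_familyPath _ _ _) _ <|
      Path.trans_continuous_family _ (continuous_uncurry_familyPath _ _ _) _ <|
      Path.symm_continuous_family _ (continuous_uncurry_familyPath _ _ _)
  · intro p hp
    simp only [Path.trans_range, Path.symm_range, union_subset_iff]
    refine ⟨?_, ?_, ?_, ?_, ?_⟩ <;> rintro _ ⟨s, rfl⟩
    · exact homotopyArc_of_eq hh0 hp _ _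
    · exact chordArc_of_eq hh0 hp _
    · exact bridgeArc_of_eq hh0 hε hp _
    · exact plannerArc_of_eq hh0 hε hp _
    · exact (homotopyArc_of_eq hh0 hp _ _).trans hp.symm

theorem exists_isFiberwiseMotionPlanner_preimage [CompactSpace B] [ProperSpace V] [CompactSpace Y]
    (hg : Continuous g) (hf : Continuous f) (hh : ContinuousOn h (Icc 0 1 ×ˢ univ))
    (hh0 : ∀ p, h (0, p) = p.2) (hh1 : ∀ p, h (1, p) = g (p.1, f p)) {U C : Set (B × Y × Y)}
    (hφ : IsFiberwiseMotionPlanner U φ) (hC : IsCompact C) (hCU : C ⊆ U) :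
    ∃ ψ, IsFiberwiseMotionPlanner (fiberProdMap f ⁻¹' C) ψ := by
  obtain ⟨ε, hε, hε2, hnear⟩ := exists_pos_forall_dist_lt_two hg hf hφ hC hCU
  exact exists_isFiberwiseMotionPlanner_of_forall_dist_lt_two hg hf hh hh0 hh1 hφ
    (fun _ hx ↦ hCU hx) hε hε2 hnear

end Pullback

theorem stmt10_general {V V'' : Type*}
    [NormedAddCommGroup V] [InnerProductSpace ℝ V] [FiniteDimensional ℝ V]
    [NormedAddCommGroup V''] [InnerProductSpace ℝ V''] [FiniteDimensional ℝ V'']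
    {B : Type*} [MetricSpace B] [CompactSpace B] {k : ℕ}
    (f : B × Metric.sphere (0 : V) 1 → Metric.sphere (0 : V'') 1)
    (g : B × Metric.sphere (0 : V'') 1 → Metric.sphere (0 : V) 1)
    (hf : Continuous f) (hg : Continuous g)
    (h : ℝ × (B × Metric.sphere (0 : V) 1) → Metric.sphere (0 : V) 1)
    (hhcont : ContinuousOn h (Set.Icc (0 : ℝ) 1 ×ˢ Set.univ))
    (hh0 : ∀ p : B × Metric.sphere (0 : V) 1, h (0, p) = p.2)
    (hh1 : ∀ p : B × Metric.sphere (0 : V) 1, h (1, p) = g (p.1, f p))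
    (U'' : Fin (k + 1) → Set (B × Metric.sphere (0 : V'') 1 × Metric.sphere (0 : V'') 1))
    (φ'' : Fin (k + 1) → ℝ × (B × Metric.sphere (0 : V'') 1 × Metric.sphere (0 : V'') 1) →
      Metric.sphere (0 : V'') 1)
    (hU''open : ∀ i, IsOpen (U'' i))
    (hU''cover : (⋃ i, U'' i) = Set.univ)
    (hφ''cont : ∀ i, ContinuousOn (φ'' i) (Set.Icc (-1 : ℝ) 1 ×ˢ U'' i))
    (hφ''1 : ∀ i, ∀ p ∈ U'' i, φ'' i (1, p) = p.2.1)
    (hφ''2 : ∀ i, ∀ p ∈ U'' i, φ'' i (-1, p) = p.2.2)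
    (hφ''diag : ∀ i, ∀ p ∈ U'' i, p.2.1 = p.2.2 →
      ∀ t ∈ Set.Icc (-1 : ℝ) 1, φ'' i (t, p) = p.2.1) :
    ∃ (U : Fin (k + 1) → Set (B × Metric.sphere (0 : V) 1 × Metric.sphere (0 : V) 1))
      (φ : Fin (k + 1) → ℝ × (B × Metric.sphere (0 : V) 1 × Metric.sphere (0 : V) 1) →
        Metric.sphere (0 : V) 1),
      (∀ i, IsOpen (U i)) ∧
      (⋃ i, U i) = Set.univ ∧
      (∀ i, ContinuousOn (φ i) (Set.Icc (-1 : ℝ) 1 ×ˢ U i)) ∧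
      (∀ i, ∀ p ∈ U i, φ i (1, p) = p.2.1) ∧
      (∀ i, ∀ p ∈ U i, φ i (-1, p) = p.2.2) ∧
      (∀ i, ∀ p ∈ U i, p.2.1 = p.2.2 → ∀ t ∈ Set.Icc (-1 : ℝ) 1, φ i (t, p) = p.2.1) := by
  obtain ⟨W, hWU, hWopen, hWcl⟩ :=
    exists_iUnion_eq_closure_subset hU''open (fun _ ↦ Set.toFinite _) hU''cover
  have hφ'' (i : Fin (k + 1)) : IsFiberwiseMotionPlanner (U'' i) (φ'' i) :=
    ⟨hφ''cont i, hφ''1 i, hφ''2 i, hφ''diag i⟩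
  choose φ hφ using fun i ↦ exists_isFiberwiseMotionPlanner_preimage hg hf hhcont hh0 hh1
    (hφ'' i) isClosed_closure.isCompact (hWcl i)
  have hφW (i : Fin (k + 1)) := (hφ i).mono (preimage_mono (subset_closure (s := W i)))
  refine ⟨fun i ↦ fiberProdMap f ⁻¹' W i, φ,
    fun i ↦ (hWopen i).preimage (continuous_fiberProdMap hf), ?_, fun i ↦ (hφW i).continuousOn,
    fun i ↦ (hφW i).apply_one, fun i ↦ (hφW i).apply_neg_one, fun i ↦ (hφW i).apply_of_eq⟩
  rw [← preimage_iUnion, hWU, preimage_univ]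

/-- Proposition 2.11 (fibre homotopy invariance of condition (3) of Theorem 2.2),
for trivialized bundles: if the identity of `B × S(V)` is fibrewise homotopic to
`g ∘ f` and `B × S(V″)` admits `k+1` fibrewise motion planners fixing the
diagonal, then so does `B × S(V)`. -/
theorem stmt10 {V V'' : Type*}
    [NormedAddCommGroup V] [InnerProductSpace ℝ V] [FiniteDimensional ℝ V]
    [NormedAddCommGroup V''] [InnerProductSpace ℝ V''] [FiniteDimensional ℝ V'']
    (hdV : 2 ≤ Module.finrank ℝ V) (hdV'' : 2 ≤ Module.finrank ℝ V'')
    {B : Type*} [MetricSpace B] [CompactSpace B] {k : ℕ}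
    (f : B × Metric.sphere (0 : V) 1 → Metric.sphere (0 : V'') 1)
    (g : B × Metric.sphere (0 : V'') 1 → Metric.sphere (0 : V) 1)
    (hf : Continuous f) (hg : Continuous g)
    (h : ℝ × (B × Metric.sphere (0 : V) 1) → Metric.sphere (0 : V) 1)
    (hhcont : ContinuousOn h (Set.Icc (0 : ℝ) 1 ×ˢ Set.univ))
    (hh0 : ∀ p : B × Metric.sphere (0 : V) 1, h (0, p) = p.2)
    (hh1 : ∀ p : B × Metric.sphere (0 : V) 1, h (1, p) = g (p.1, f p))
    (U'' : Fin (k + 1) → Set (B × Metric.sphere (0 : V'') 1 × Metric.sphere (0 : V'') 1))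
    (φ'' : Fin (k + 1) → ℝ × (B × Metric.sphere (0 : V'') 1 × Metric.sphere (0 : V'') 1) →
      Metric.sphere (0 : V'') 1)
    (hU''open : ∀ i, IsOpen (U'' i))
    (hU''cover : (⋃ i, U'' i) = Set.univ)
    (hφ''cont : ∀ i, ContinuousOn (φ'' i) (Set.Icc (-1 : ℝ) 1 ×ˢ U'' i))
    (hφ''1 : ∀ i, ∀ p ∈ U'' i, φ'' i (1, p) = p.2.1)
    (hφ''2 : ∀ i, ∀ p ∈ U'' i, φ'' i (-1, p) = p.2.2)
    (hφ''diag : ∀ i, ∀ p ∈ U'' i, p.2.1 = p.2.2 →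
      ∀ t ∈ Set.Icc (-1 : ℝ) 1, φ'' i (t, p) = p.2.1) :
    ∃ (U : Fin (k + 1) → Set (B × Metric.sphere (0 : V) 1 × Metric.sphere (0 : V) 1))
      (φ : Fin (k + 1) → ℝ × (B × Metric.sphere (0 : V) 1 × Metric.sphere (0 : V) 1) →
        Metric.sphere (0 : V) 1),
      (∀ i, IsOpen (U i)) ∧
      (⋃ i, U i) = Set.univ ∧
      (∀ i, ContinuousOn (φ i) (Set.Icc (-1 : ℝ) 1 ×ˢ U i)) ∧
      (∀ i, ∀ p ∈ U i, φ i (1, p) = p.2.1) ∧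
      (∀ i, ∀ p ∈ U i, φ i (-1, p) = p.2.2) ∧
      (∀ i, ∀ p ∈ U i, p.2.1 = p.2.2 → ∀ t ∈ Set.Icc (-1 : ℝ) 1, φ i (t, p) = p.2.1) :=
  stmt10_general f g hf hg h hhcont hh0 hh1 U'' φ'' hU''open hU''cover hφ''cont hφ''1 hφ''2 hφ''diag
end

section
/- Let r ≥ 1 and n = 2^r. In the polynomial ring F₂[S,T] over the field with two elements, let I be the ideal generated by S^{n+1} and T^n + S·T^{n−1} + S²·T^{n−2} + … + S^n (that is, Σ_{i=0}^{n} S^i T^{n−i}). Then (T+S)^{2n−1} ∈ I, but (T+S)^{2n−2} ∉ I; indeed (T+S)^{2n−2} is congruent modulo I to T^n S^{n−2} + T^{n−2} S^n, which is nonzero in F₂[S,T]/I. -/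
/-!
Write `s, t` for the images of `S, T` in `F₂[S,T]/I` and `q = Σ sⁱtⁿ⁻ⁱ`. Since
`q (s - t) = sⁿ⁺¹ - tⁿ⁺¹`, also `tⁿ⁺¹ = 0`; and `sⁿ⁺¹ = 0` gives `sⁿ (s + t)ᵏ = sⁿ tᵏ`. As `n` is a
power of `2`, `(t + s)ⁿ = tⁿ + sⁿ`, so `(t + s)²ⁿ⁻² = (tⁿ + sⁿ)(t + s)ⁿ⁻² = tⁿsⁿ⁻² + tⁿ⁻²sⁿ` and
`(t + s)²ⁿ⁻¹ = tⁿsⁿ⁻¹ + tⁿ⁻¹sⁿ = sⁿ⁻¹ q = 0`.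

For the non-membership, multiplication by `S - T` maps `I` into the monomial ideal
`(Sⁿ⁺¹, Tⁿ⁺¹)`, but `(S - T)(TⁿSⁿ⁻² + Tⁿ⁻²Sⁿ)` has the monomial `Sⁿ⁻¹Tⁿ`, which lies outside it.
-/

open MvPolynomial Finset

section CommRing

variable {R : Type*} [CommRing R]

theorem geom_sum₂_succ_mul_sub (x y : R) (n : ℕ) :
    (∑ i ∈ range (n + 1), x ^ i * y ^ (n - i)) * (x - y) = x ^ (n + 1) - y ^ (n + 1) := by
  simpa using geom_sum₂_mul x y (n + 1)

variable {n : ℕ}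

theorem sub_mul_mem_span_pow_of_mem_span_geom_sum₂ {x y p : R}
    (hp : p ∈ Ideal.span {x ^ (n + 1), ∑ i ∈ range (n + 1), x ^ i * y ^ (n - i)}) :
    (x - y) * p ∈ Ideal.span {x ^ (n + 1), y ^ (n + 1)} := by
  obtain ⟨a, b, rfl⟩ := Ideal.mem_span_pair.mp hp
  exact Ideal.mem_span_pair.mpr ⟨(x - y) * a + b, -b, by
    linear_combination -b * geom_sum₂_succ_mul_sub x y n⟩

variable {s t : R}

theorem pow_succ_eq_zero_of_geom_sum₂_eq_zero (hs : s ^ (n + 1) = 0)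
    (hq : ∑ i ∈ range (n + 1), s ^ i * t ^ (n - i) = 0) : t ^ (n + 1) = 0 := by
  linear_combination -(s - t) * hq + geom_sum₂_succ_mul_sub s t n + hs

theorem pow_mul_add_pow_eq_pow_mul_pow (hs : s ^ (n + 1) = 0) (k : ℕ) :
    s ^ n * (s + t) ^ k = s ^ n * t ^ k := by
  obtain ⟨c, hc⟩ : s ∣ (s + t) ^ k - t ^ k := by simpa using sub_dvd_pow_sub_pow (s + t) t k
  linear_combination s ^ n * hc + c * hs

theorem pow_pred_mul_geom_sum₂ (hn : 1 ≤ n) (hs : s ^ (n + 1) = 0) :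
    s ^ (n - 1) * ∑ i ∈ range (n + 1), s ^ i * t ^ (n - i) =
      s ^ (n - 1) * t ^ n + s ^ n * t ^ (n - 1) := by
  obtain ⟨m, rfl⟩ : ∃ m, n = m + 1 := ⟨n - 1, by omega⟩
  have htail : ∀ i ∈ range m, s ^ m * (s ^ (i + 1 + 1) * t ^ (m + 1 - (i + 1 + 1))) = 0 :=
    fun i _ => by
      rw [← mul_assoc, ← pow_add, show m + (i + 1 + 1) = m + 1 + 1 + i by omega, pow_add, hs,
        zero_mul, zero_mul]
  rw [Nat.add_sub_cancel, sum_range_succ', sum_range_succ', mul_add, mul_add, mul_sum,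
    sum_eq_zero htail]
  simp only [Nat.add_sub_cancel, zero_add, pow_one, pow_zero, one_mul, Nat.sub_zero]
  ring

theorem add_pow_two_mul_sub_two (hn : 2 ≤ n) (hs : s ^ (n + 1) = 0) (ht : t ^ (n + 1) = 0)
    (hfrob : (s + t) ^ n = s ^ n + t ^ n) :
    (s + t) ^ (2 * n - 2) = s ^ n * t ^ (n - 2) + s ^ (n - 2) * t ^ n := by
  rw [show 2 * n - 2 = n + (n - 2) by omega, pow_add, hfrob, add_mul,
    pow_mul_add_pow_eq_pow_mul_pow hs, add_comm s, pow_mul_add_pow_eq_pow_mul_pow ht]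
  ring

theorem add_pow_two_mul_sub_one_eq_zero (hn : 1 ≤ n) (hs : s ^ (n + 1) = 0)
    (hq : ∑ i ∈ range (n + 1), s ^ i * t ^ (n - i) = 0) (hfrob : (t + s) ^ n = t ^ n + s ^ n) :
    (t + s) ^ (2 * n - 1) = 0 := by
  have ht := pow_succ_eq_zero_of_geom_sum₂_eq_zero hs hq
  have hprod := pow_pred_mul_geom_sum₂ hn hs (t := t)
  rw [hq, mul_zero] at hprod
  rw [show 2 * n - 1 = n + (n - 1) by omega, pow_add, hfrob, add_mul,
    pow_mul_add_pow_eq_pow_mul_pow ht, add_comm t, pow_mul_add_pow_eq_pow_mul_pow hs]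
  linear_combination -hprod

end CommRing

section MvPolynomial

variable {σ R : Type*} {n : ℕ}

theorem coeff_eq_zero_of_mem_span_X_pow_pair [CommSemiring R] {i j : σ} {p : MvPolynomial σ R}
    (hp : p ∈ Ideal.span {X i ^ (n + 1), X j ^ (n + 1)}) {a : σ →₀ ℕ} (hi : a i ≤ n)
    (hj : a j ≤ n) : coeff a p = 0 := by
  obtain ⟨u, v, rfl⟩ := Ideal.mem_span_pair.mp hp
  rw [coeff_add, X_pow_eq_monomial, X_pow_eq_monomial, coeff_mul_monomial', coeff_mul_monomial',
    if_neg, if_neg, add_zero] <;> rw [Finsupp.single_le_iff] <;> omega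

theorem pow_mul_pow_add_pow_mul_pow_notMem_span [CommRing R] [Nontrivial R] {i j : σ}
    (hij : i ≠ j) (hn : 2 ≤ n) :
    X j ^ n * X i ^ (n - 2) + X j ^ (n - 2) * X i ^ n ∉
      Ideal.span ({X i ^ (n + 1), ∑ k ∈ range (n + 1), X i ^ k * X j ^ (n - k)} :
        Set (MvPolynomial σ R)) := by
  classical
  obtain ⟨m, rfl⟩ : ∃ m, n = m + 2 := ⟨n - 2, by omega⟩
  intro hmem
  have hdiff : (X i - X j) * (X j ^ (m + 2) * X i ^ (m + 2 - 2) + X j ^ (m + 2 - 2) * X i ^ (m + 2))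
      - (X j ^ (m + 2) * X i ^ (m + 1) - X j ^ (m + 1) * X i ^ (m + 2)) ∈
      Ideal.span ({X i ^ (m + 2 + 1), X j ^ (m + 2 + 1)} : Set (MvPolynomial σ R)) :=
    Ideal.mem_span_pair.mpr ⟨X j ^ m, -X i ^ m, by simp only [Nat.add_sub_cancel]; ring⟩
  have hD := Submodule.sub_mem _ (sub_mul_mem_span_pow_of_mem_span_geom_sum₂ hmem) hdiff
  rw [sub_sub_cancel] at hD
  have hcoeff := coeff_eq_zero_of_mem_span_X_pow_pair hD
    (a := Finsupp.single i (m + 1) + Finsupp.single j (m + 2)) (by simp [hij]) (by simp [hij.symm])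
  rw [X_pow_eq_monomial, X_pow_eq_monomial, X_pow_eq_monomial, X_pow_eq_monomial, monomial_mul,
    monomial_mul, coeff_sub, coeff_monomial, coeff_monomial, if_pos (add_comm _ _),
    if_neg] at hcoeff
  · simp at hcoeff
  · intro h
    simpa [hij] using DFunLike.congr_fun h i

end MvPolynomial

/-- Example 3.6 (after Farber and Milnor): in `F₂[S,T]` with
`I = (S^{n+1}, Σ_{i=0}^{n} S^i T^{n-i})` and `n = 2^r`, `(T+S)^{2n-1} ∈ I`, while
`(T+S)^{2n-2}` is congruent mod `I` to `T^n S^{n-2} + T^{n-2} S^n ≠ 0` in the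
quotient; in particular `(T+S)^{2n-2} ∉ I`. -/
theorem stmt11 (r n : ℕ) (hr : 1 ≤ r) (hn : n = 2 ^ r)
    (S T : MvPolynomial (Fin 2) (ZMod 2)) (hS : S = MvPolynomial.X 0)
    (hT : T = MvPolynomial.X 1)
    (I : Ideal (MvPolynomial (Fin 2) (ZMod 2)))
    (hI : I = Ideal.span {S ^ (n + 1), ∑ i ∈ Finset.range (n + 1), S ^ i * T ^ (n - i)}) :
    (T + S) ^ (2 * n - 1) ∈ I ∧
    (T + S) ^ (2 * n - 2) ∉ I ∧
    (T + S) ^ (2 * n - 2) + (T ^ n * S ^ (n - 2) + T ^ (n - 2) * S ^ n) ∈ I ∧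
    T ^ n * S ^ (n - 2) + T ^ (n - 2) * S ^ n ∉ I := by
  have h2n : 2 ≤ n := hn ▸ Nat.le_self_pow (by omega) 2
  set π := Ideal.Quotient.mk I
  have hs : π S ^ (n + 1) = 0 := by
    rw [← map_pow, Ideal.Quotient.eq_zero_iff_mem, hI]
    exact Ideal.subset_span (by simp)
  have hq : ∑ i ∈ range (n + 1), π S ^ i * π T ^ (n - i) = 0 := by
    simp only [← map_pow, ← map_mul, ← map_sum]
    rw [Ideal.Quotient.eq_zero_iff_mem, hI]
    exact Ideal.subset_span (by simp)
  have hfrob : (π T + π S) ^ n = π T ^ n + π S ^ n := by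
    simp only [← map_pow, ← map_add, hn, add_pow_char_pow]
  have hnot : T ^ n * S ^ (n - 2) + T ^ (n - 2) * S ^ n ∉ I := by
    rw [hI, hS, hT]
    exact pow_mul_pow_add_pow_mul_pow_notMem_span (by decide) h2n
  have hcong : (T + S) ^ (2 * n - 2) + (T ^ n * S ^ (n - 2) + T ^ (n - 2) * S ^ n) ∈ I := by
    rw [← CharTwo.sub_eq_add, ← Ideal.Quotient.eq]
    simp only [map_pow, map_add, map_mul]
    exact add_pow_two_mul_sub_two h2n (pow_succ_eq_zero_of_geom_sum₂_eq_zero hs hq) hs hfrob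
  refine ⟨?_, fun h => hnot ((I.add_mem_iff_right h).mp hcong), hcong, hnot⟩
  rw [← Ideal.Quotient.eq_zero_iff_mem, map_pow, map_add]
  exact add_pow_two_mul_sub_one_eq_zero (by omega) hs hq hfrob
end

section
/- Let n ≥ 1. In the polynomial ring ℤ[S,T], let I be the ideal generated by S^{n+1} and T^n + S·T^{n−1} + … + S^n (that is, Σ_{i=0}^{n} S^i T^{n−i}). Then (T−S)^{2n−1} is congruent modulo I to (−1)^n·C(2n−1,n)·(T^{n−1}S^n − T^n S^{n−1}), where C(2n−1,n) is the binomial coefficient, and (T−S)^{2n−1} ∉ I. -/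
/-!
Modulo `I` we have `S^{n+1} = 0`, and multiplying the second generator by `S - T` gives
`T^{n+1} = 0` as well, so only the two middle terms of the binomial expansion of
`(T - S)^{2n-1}` survive. Conversely, `(T - S) • I ⊆ (S^{n+1}, T^{n+1})`, so membership would put
`(T - S)^{2n}` into this monomial ideal, whose elements have no `S^n T^n` term; but that
coefficient of `(T - S)^{2n}` is `(-1)^n C(2n, n) ≠ 0`.
-/

open Finset

section CommRing

variable {R : Type*} [CommRing R]

theorem geom_sum₂_range_succ_mul (s t : R) (m : ℕ) :
    (∑ i ∈ range (m + 1), s ^ i * t ^ (m - i)) * (s - t) = s ^ (m + 1) - t ^ (m + 1) := by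
  simpa using geom_sum₂_mul s t (m + 1)

theorem pow_eq_zero_of_geom_sum₂_eq_zero {s t : R} {m : ℕ} (hs : s ^ (m + 1) = 0)
    (h : ∑ i ∈ range (m + 1), s ^ i * t ^ (m - i) = 0) : t ^ (m + 1) = 0 := by
  linear_combination hs - (s - t) * h + geom_sum₂_range_succ_mul s t m

theorem sub_pow_eq_of_pow_eq_zero {s t : R} {k : ℕ} (hs : s ^ (k + 2) = 0)
    (ht : t ^ (k + 2) = 0) :
    (t - s) ^ (2 * k + 1) =
      (-1) ^ (k + 1) * ((2 * k + 1).choose (k + 1) : R) *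
        (t ^ k * s ^ (k + 1) - t ^ (k + 1) * s ^ k) := by
  have hs' : (-s) ^ (k + 2) = 0 := by rw [neg_pow, hs, mul_zero]
  rw [sub_eq_add_neg, add_pow, sum_eq_add k (k + 1) (by omega)]
  · rw [show 2 * k + 1 - k = k + 1 by omega, show 2 * k + 1 - (k + 1) = k by omega,
      Nat.choose_symm_half, neg_pow, neg_pow]
    ring
  · intro c hc ⟨hck, hck'⟩
    rcases lt_or_gt_of_ne hck with hlt | hgt
    · rw [pow_eq_zero_of_le (by omega) hs', mul_zero, zero_mul]
    · rw [pow_eq_zero_of_le (by omega) ht, zero_mul, zero_mul]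
  all_goals intro h; simp at h; omega

theorem sub_pow_sub_mem_span (s t : R) (k : ℕ) :
    (t - s) ^ (2 * k + 1) - (-1) ^ (k + 1) * ((2 * k + 1).choose (k + 1) : R) *
        (t ^ k * s ^ (k + 1) - t ^ (k + 1) * s ^ k) ∈
      Ideal.span {s ^ (k + 2), ∑ i ∈ range (k + 2), s ^ i * t ^ (k + 1 - i)} := by
  set I := Ideal.span {s ^ (k + 2), ∑ i ∈ range (k + 2), s ^ i * t ^ (k + 1 - i)}
  have hs : Ideal.Quotient.mk I s ^ (k + 2) = 0 := by
    rw [← map_pow, Ideal.Quotient.eq_zero_iff_mem]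
    exact Ideal.subset_span (by simp)
  have hg : ∑ i ∈ range (k + 2),
      Ideal.Quotient.mk I s ^ i * Ideal.Quotient.mk I t ^ (k + 1 - i) = 0 := by
    simp only [← map_pow, ← map_mul, ← map_sum, Ideal.Quotient.eq_zero_iff_mem]
    exact Ideal.subset_span (by simp)
  rw [← Ideal.Quotient.eq]
  simpa using sub_pow_eq_of_pow_eq_zero hs (pow_eq_zero_of_geom_sum₂_eq_zero hs hg)

theorem mul_mem_span_pow_of_mem_span_geom_sum₂ {s t x : R} {m : ℕ}
    (hx : x ∈ Ideal.span {s ^ (m + 1), ∑ i ∈ range (m + 1), s ^ i * t ^ (m - i)}) :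
    (t - s) * x ∈ Ideal.span {s ^ (m + 1), t ^ (m + 1)} := by
  obtain ⟨a, b, rfl⟩ := Ideal.mem_span_pair.mp hx
  refine Ideal.mem_span_pair.mpr ⟨(t - s) * a - b, b, ?_⟩
  linear_combination b * geom_sum₂_range_succ_mul s t m

end CommRing

open Polynomial in
theorem X_sub_C_X_pow_notMem_span {R : Type*} [CommRing R] [CharZero R] (n : ℕ) :
    (X - C X : R[X][X]) ^ (2 * n) ∉ Ideal.span {C X ^ (n + 1), X ^ (n + 1)} := by
  have hcoeff : (((X - C X : R[X][X]) ^ (2 * n)).coeff n).coeff n =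
      (-1) ^ n * (2 * n).choose n := by
    rw [sub_eq_add_neg, ← C_neg, coeff_X_add_C_pow, two_mul, Nat.add_sub_cancel, neg_pow,
      coeff_mul_natCast, ← C_1, ← C_neg, ← C_pow, coeff_C_mul_X_pow, if_pos rfl]
  intro h
  obtain ⟨a, b, hab⟩ := Ideal.mem_span_pair.mp h
  apply_fun fun p => (p.coeff n).coeff n at hab
  rw [← C_pow, coeff_add, coeff_add, coeff_mul_C, coeff_mul_X_pow', if_neg (by omega),
    coeff_mul_X_pow', if_neg (by omega), coeff_zero, zero_add, hcoeff, eq_comm,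
    neg_one_pow_mul_eq_zero_iff, Nat.cast_eq_zero] at hab
  exact (Nat.choose_pos (by omega)).ne' hab

open MvPolynomial in
theorem X_sub_X_pow_notMem_span {R : Type*} [CommRing R] [CharZero R] (n : ℕ) :
    (X 1 - X 0 : MvPolynomial (Fin 2) R) ^ (2 * n) ∉
      Ideal.span {X 0 ^ (n + 1), X 1 ^ (n + 1)} := by
  intro h
  apply X_sub_C_X_pow_notMem_span (R := R) n
  have := Ideal.mem_map_of_mem
    (aeval ![(Polynomial.C Polynomial.X : Polynomial (Polynomial R)), Polynomial.X]) h
  rw [Ideal.map_span, Set.image_pair] at this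
  simpa using this

/-- Example 3.7 (after Farber): in `ℤ[S,T]` with
`I = (S^{n+1}, Σ_{i=0}^{n} S^i T^{n-i})`, the power `(T−S)^{2n−1}` is congruent
mod `I` to `(−1)^n·C(2n−1,n)·(T^{n−1}S^n − T^n S^{n−1})`, and `(T−S)^{2n−1} ∉ I`. -/
theorem stmt12 (n : ℕ) (hn : 1 ≤ n)
    (S T : MvPolynomial (Fin 2) ℤ) (hS : S = MvPolynomial.X 0)
    (hT : T = MvPolynomial.X 1)
    (I : Ideal (MvPolynomial (Fin 2) ℤ))
    (hI : I = Ideal.span {S ^ (n + 1), ∑ i ∈ Finset.range (n + 1), S ^ i * T ^ (n - i)}) :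
    (T - S) ^ (2 * n - 1) -
      ((-1 : MvPolynomial (Fin 2) ℤ) ^ n * (Nat.choose (2 * n - 1) n : MvPolynomial (Fin 2) ℤ)) *
        (T ^ (n - 1) * S ^ n - T ^ n * S ^ (n - 1)) ∈ I ∧
    (T - S) ^ (2 * n - 1) ∉ I := by
  obtain ⟨k, rfl⟩ : ∃ k, n = k + 1 := ⟨n - 1, by omega⟩
  subst hS hT hI
  rw [show 2 * (k + 1) - 1 = 2 * k + 1 by omega, Nat.add_sub_cancel]
  refine ⟨sub_pow_sub_mem_span _ _ k, fun h => ?_⟩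
  have h' := mul_mem_span_pow_of_mem_span_geom_sum₂ h
  rw [← pow_succ', show 2 * k + 1 + 1 = 2 * (k + 1) by ring] at h'
  exact X_sub_X_pow_notMem_span (k + 1) h'
end
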